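/- arXiv:2509.00792 — 10 statements merged into one kernel-verified Lean document; each statement's English description precedes it below -/
import Mathlib

section
/- Let m, p ∈ ℕ with m+1 < p ≤ 2m, and let A = [0,m] ∪ {p}. Then |A+A| = m+p+2 and |A-A| = 2p+1; in particular A is MDTS with |A-A| - |A+A| = p - m - 1. -/
/-!
Write `A = [0,m] ∪ {p}` with `m < p ≤ 2m + 1`. The sums `[0,m] + [0,m] = [0,2m]` and
`p + [0,m] = [p, p+m]` overlap or abut, so `A + A = [0, p+m] ∪ {2p}`. The differences
`[-m,m]`, `p - [0,m] = [p-m, p]` and its negative also leave no gap, so `A - A = [-p, p]`.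
-/

open Finset Pointwise

variable {m p : ℤ}

theorem Icc_union_singleton_add_self (hm : 0 ≤ m) (hmp : m ≤ p) (hp : p ≤ 2 * m + 1) :
    (Icc 0 m ∪ {p}) + (Icc 0 m ∪ {p}) = Icc 0 (p + m) ∪ {2 * p} := by
  ext x
  simp only [mem_add, mem_union, mem_Icc, mem_singleton]
  constructor
  · rintro ⟨a, ha, b, hb, rfl⟩
    omega
  · rintro (⟨hx0, hx⟩ | rfl)
    · rcases le_or_gt x m with hxm | hxm
      · exact ⟨0, .inl ⟨le_rfl, hm⟩, x, .inl ⟨hx0, hxm⟩, zero_add x⟩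
      rcases le_or_gt x (2 * m) with hx2m | hx2m
      · exact ⟨m, .inl ⟨hm, le_rfl⟩, x - m, .inl ⟨by omega, by omega⟩,
          add_sub_cancel m x⟩
      · exact ⟨p, .inr rfl, x - p, .inl ⟨by omega, by omega⟩, add_sub_cancel p x⟩
    · exact ⟨p, .inr rfl, p, .inr rfl, (two_mul p).symm⟩

theorem Icc_union_singleton_sub_self (hm : 0 ≤ m) (hmp : m ≤ p) (hp : p ≤ 2 * m + 1) :
    (Icc 0 m ∪ {p}) - (Icc 0 m ∪ {p}) = Icc (-p) p := by
  ext x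
  simp only [mem_sub, mem_union, mem_Icc, mem_singleton]
  constructor
  · rintro ⟨a, ha, b, hb, rfl⟩
    omega
  · rintro ⟨hpx, hxp⟩
    rcases lt_or_ge m x with hmx | hxm
    · exact ⟨p, .inr rfl, p - x, .inl ⟨by omega, by omega⟩, sub_sub_cancel p x⟩
    rcases lt_or_ge x (-m) with hxm' | hmx'
    · exact ⟨p + x, .inl ⟨by omega, by omega⟩, p, .inr rfl, add_sub_cancel_left p x⟩
    rcases le_or_gt 0 x with hx0 | hx0
    · exact ⟨x, .inl ⟨hx0, hxm⟩, 0, .inl ⟨le_rfl, hm⟩, sub_zero x⟩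
    · exact ⟨0, .inl ⟨le_rfl, hm⟩, -x, .inl ⟨by omega, by omega⟩,
        by rw [zero_sub, neg_neg]⟩

theorem card_Icc_union_singleton_add_self (hm : 0 ≤ m) (hmp : m < p) (hp : p ≤ 2 * m + 1) :
    ((Icc 0 m ∪ {p} + (Icc 0 m ∪ {p})).card : ℤ) = m + p + 2 := by
  have h2p : 2 * p ∉ Icc 0 (p + m) := by simp only [mem_Icc]; omega
  rw [Icc_union_singleton_add_self hm hmp.le hp,
    card_union_of_disjoint (disjoint_singleton_right.2 h2p), card_singleton, Int.card_Icc]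
  omega

theorem card_Icc_union_singleton_sub_self (hm : 0 ≤ m) (hmp : m ≤ p) (hp : p ≤ 2 * m + 1) :
    ((Icc 0 m ∪ {p} - (Icc 0 m ∪ {p})).card : ℤ) = 2 * p + 1 := by
  rw [Icc_union_singleton_sub_self hm hmp hp, Int.card_Icc]
  omega

theorem stmt_6 (m p : ℤ) (hm : 0 ≤ m) (hp1 : m + 1 < p) (hp2 : p ≤ 2 * m)
    (A : Finset ℤ) (hA : A = Finset.Icc 0 m ∪ {p}) :
    ((A + A).card : ℤ) = m + p + 2 ∧ ((A - A).card : ℤ) = 2 * p + 1 ∧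
    (A + A).card < (A - A).card ∧ ((A - A).card : ℤ) - ((A + A).card : ℤ) = p - m - 1 := by
  subst hA
  have hsum := card_Icc_union_singleton_add_self (p := p) hm (by omega) (by omega)
  have hdiff := card_Icc_union_singleton_sub_self (p := p) hm (by omega) (by omega)
  exact ⟨hsum, hdiff, by omega, by omega⟩
end

section
/- For m, p ∈ ℕ with p > m+1 and A = [0,m] ∪ {p}, the sumset is A+A = [0,2m] ∪ [p, m+p] ∪ {2p} and the difference set is A-A = [-m,m] ∪ [-p, m-p] ∪ [p-m, p]. -/
open Finset Pointwise

theorem stmt_8 (m p : ℤ) (hm : 0 ≤ m) (hp : p > m + 1)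
    (A : Finset ℤ) (hA : A = Finset.Icc 0 m ∪ {p}) :
    A + A = Finset.Icc 0 (2 * m) ∪ Finset.Icc p (m + p) ∪ {2 * p} ∧
    A - A = Finset.Icc (-m) m ∪ Finset.Icc (-p) (m - p) ∪ Finset.Icc (p - m) p := by
  subst hA
  constructor
  · ext x
    simp only [Finset.mem_add, Finset.mem_union, Finset.mem_Icc, Finset.mem_singleton]
    constructor
    · rintro ⟨a, ha, b, hb, rfl⟩; omega
    · rintro ((⟨h0, h1⟩ | ⟨h0, h1⟩) | rfl)
      · by_cases h : x ≤ m
        · exact ⟨x, by omega, 0, by omega, by ring⟩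
        · exact ⟨m, by omega, x - m, by omega, by ring⟩
      · exact ⟨x - p, by omega, p, by omega, by ring⟩
      · exact ⟨p, by omega, p, by omega, by ring⟩
  · ext x
    simp only [Finset.mem_sub, Finset.mem_union, Finset.mem_Icc, Finset.mem_singleton]
    constructor
    · rintro ⟨a, ha, b, hb, rfl⟩; omega
    · rintro ((⟨h0, h1⟩ | ⟨h0, h1⟩) | ⟨h0, h1⟩)
      · by_cases h : 0 ≤ x
        · exact ⟨x, by omega, 0, by omega, by ring⟩
        · exact ⟨0, by omega, -x, by omega, by ring⟩
      · exact ⟨x + p, by omega, p, by omega, by ring⟩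
      · exact ⟨p, by omega, p - x, by omega, by ring⟩
end

section
/- Every MSTD set A has an MDTS superset: if A ⊆ ℤ is finite and MSTD with min A = 0 and max A = m ≥ 1, then for any p > m+1 the set B = [0,m] ∪ {p} satisfies A ⊆ B and B is MDTS. -/
open Finset Pointwise

theorem stmt_9 (A : Finset ℤ) (hne : A.Nonempty) (m p : ℤ) (hm : 1 ≤ m)
    (hmin : A.min' hne = 0) (hmax : A.max' hne = m)
    (hMSTD : (A - A).card < (A + A).card) (hp : p > m + 1)
    (B : Finset ℤ) (hB : B = Finset.Icc 0 m ∪ {p}) :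
    A ⊆ B ∧ (B + B).card < (B - B).card := by
  constructor
  · intro a ha
    rw [hB, Finset.mem_union, Finset.mem_Icc]
    left
    constructor
    · rw [← hmin]; exact A.min'_le a ha
    · rw [← hmax]; exact A.le_max' a ha
  · -- membership helper for B - B
    have hsub : ∀ x : ℤ, (-p ≤ x ∧ x ≤ m - p) ∨ (-m ≤ x ∧ x ≤ m) ∨ (p - m ≤ x ∧ x ≤ p) →
        x ∈ B - B := by
      intro x hx
      rw [Finset.mem_sub]
      rcases hx with h | h | h
      · refine ⟨x + p, ?_, p, ?_, by ring⟩
        · rw [hB, Finset.mem_union, Finset.mem_Icc]; left; omega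
        · rw [hB, Finset.mem_union]; right; simp
      · rcases le_or_gt 0 x with h0 | h0
        · refine ⟨x, ?_, 0, ?_, by ring⟩
          · rw [hB, Finset.mem_union, Finset.mem_Icc]; left; omega
          · rw [hB, Finset.mem_union, Finset.mem_Icc]; left; omega
        · refine ⟨0, ?_, -x, ?_, by ring⟩
          · rw [hB, Finset.mem_union, Finset.mem_Icc]; left; omega
          · rw [hB, Finset.mem_union, Finset.mem_Icc]; left; omega
      · refine ⟨p, ?_, p - x, ?_, by ring⟩
        · rw [hB, Finset.mem_union]; right; simp
        · rw [hB, Finset.mem_union, Finset.mem_Icc]; left; omega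
    rcases le_or_gt p (2 * m) with hc | hc
    · -- case m + 1 < p ≤ 2m
      have hup : B + B ⊆ Finset.Icc 0 (p + m) ∪ {2 * p} := by
        intro x hx
        rw [Finset.mem_add] at hx
        obtain ⟨a, ha, b, hb, rfl⟩ := hx
        rw [hB, Finset.mem_union, Finset.mem_Icc, Finset.mem_singleton] at ha hb
        rw [Finset.mem_union, Finset.mem_Icc, Finset.mem_singleton]
        omega
      have hlo : Finset.Icc (-p) p ⊆ B - B := by
        intro x hx
        rw [Finset.mem_Icc] at hx
        exact hsub x (by omega)
      have h1 : (B + B).card ≤ (Finset.Icc 0 (p + m)).card + 1 :=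
        le_trans (Finset.card_le_card hup)
          (le_trans (Finset.card_union_le _ _) (by simp))
      have h2 : (Finset.Icc (-p) p).card ≤ (B - B).card := Finset.card_le_card hlo
      simp only [Int.card_Icc] at h1 h2
      omega
    · -- case p > 2m
      have hup : B + B ⊆ Finset.Icc 0 (2 * m) ∪ Finset.Icc p (p + m) ∪ {2 * p} := by
        intro x hx
        rw [Finset.mem_add] at hx
        obtain ⟨a, ha, b, hb, rfl⟩ := hx
        rw [hB, Finset.mem_union, Finset.mem_Icc, Finset.mem_singleton] at ha hb
        rw [Finset.mem_union, Finset.mem_union, Finset.mem_Icc, Finset.mem_Icc,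
          Finset.mem_singleton]
        omega
      have hlo : Finset.Icc (-p) (m - p) ∪ Finset.Icc (-m) m ∪ Finset.Icc (p - m) p
          ⊆ B - B := by
        intro x hx
        rw [Finset.mem_union, Finset.mem_union, Finset.mem_Icc, Finset.mem_Icc,
          Finset.mem_Icc] at hx
        exact hsub x (by tauto)
      have h1 : (B + B).card ≤ (Finset.Icc 0 (2 * m)).card + (Finset.Icc p (p + m)).card + 1 := by
        refine le_trans (Finset.card_le_card hup) ?_
        refine le_trans (Finset.card_union_le _ _) ?_
        have := Finset.card_union_le (Finset.Icc 0 (2 * m)) (Finset.Icc p (p + m))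
        simp only [Finset.card_singleton]
        omega
      have hd1 : Disjoint (Finset.Icc (-p) (m - p)) (Finset.Icc (-m) m) := by
        rw [Finset.disjoint_left]
        intro x hx hx'
        rw [Finset.mem_Icc] at hx hx'
        omega
      have hd2 : Disjoint (Finset.Icc (-p) (m - p) ∪ Finset.Icc (-m) m)
          (Finset.Icc (p - m) p) := by
        rw [Finset.disjoint_left]
        intro x hx hx'
        rw [Finset.mem_union, Finset.mem_Icc, Finset.mem_Icc] at hx
        rw [Finset.mem_Icc] at hx'
        omega
      have h2 : (Finset.Icc (-p) (m - p)).card + (Finset.Icc (-m) m).card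
          + (Finset.Icc (p - m) p).card ≤ (B - B).card := by
        have := Finset.card_le_card hlo
        rwa [Finset.card_union_of_disjoint hd2, Finset.card_union_of_disjoint hd1] at this
      simp only [Int.card_Icc] at h1 h2
      omega
end

section
/- For every integer l ≥ 1, the set A_{2l-1} = {0,1,2,5,8,9,10} ∪ {8k+c : 1 ≤ k ≤ l, c ∈ {6,7,9,10}} satisfies A_{2l-1} + A_{2l-1} = [0, 16l+20] \ {21}. -/
open Finset Pointwise

theorem stmt_12 (l : ℤ) (hl : 1 ≤ l) (A : Finset ℤ)
    (hA : A = ({0, 1, 2, 5, 8, 9, 10} : Finset ℤ) ∪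
      Finset.image₂ (fun k c => 8 * k + c) (Finset.Icc 1 l)
        ({6, 7, 9, 10} : Finset ℤ)) :
    A + A = Finset.Icc 0 (16 * l + 20) \ {21} := by
  have hB : ({0, 1, 2, 5, 8, 9, 10} : Finset ℤ) ⊆ A := by
    rw [hA]; exact Finset.subset_union_left
  have hD : ({14, 15, 17, 18} : Finset ℤ) ⊆ A := by
    rw [hA]
    intro d hd
    simp only [Finset.mem_union, Finset.mem_insert, Finset.mem_singleton,
      Finset.mem_image₂, Finset.mem_Icc] at hd ⊢
    rcases hd with rfl | rfl | rfl | rfl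
    · exact Or.inr ⟨1, ⟨le_refl 1, hl⟩, 6, by tauto, by ring⟩
    · exact Or.inr ⟨1, ⟨le_refl 1, hl⟩, 7, by tauto, by ring⟩
    · exact Or.inr ⟨1, ⟨le_refl 1, hl⟩, 9, by tauto, by ring⟩
    · exact Or.inr ⟨1, ⟨le_refl 1, hl⟩, 10, by tauto, by ring⟩
  apply Finset.Subset.antisymm
  · -- A + A ⊆ target
    intro x hx
    rw [hA] at hx
    simp only [Finset.mem_add, Finset.mem_union, Finset.mem_insert, Finset.mem_singleton,
      Finset.mem_image₂, Finset.mem_Icc] at hx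
    simp only [Finset.mem_sdiff, Finset.mem_Icc, Finset.mem_singleton]
    obtain ⟨a, ha, b, hb, rfl⟩ := hx
    rcases ha with (rfl | rfl | rfl | rfl | rfl | rfl | rfl) | ⟨k, ⟨hk1, hk2⟩, c, hc, rfl⟩ <;>
      rcases hb with (rfl | rfl | rfl | rfl | rfl | rfl | rfl) | ⟨k', ⟨hk1', hk2'⟩, c', hc', rfl⟩ <;>
      try rcases hc with rfl | rfl | rfl | rfl
    all_goals try rcases hc' with rfl | rfl | rfl | rfl
    all_goals omega
  · intro x hx
    simp only [Finset.mem_sdiff, Finset.mem_Icc, Finset.mem_singleton] at hx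
    obtain ⟨⟨h0, h1⟩, h2⟩ := hx
    rcases le_or_gt x 20 with hx20 | hx21
    · have hBB : ({0, 1, 2, 5, 8, 9, 10} : Finset ℤ) + {0, 1, 2, 5, 8, 9, 10}
          = Finset.Icc 0 20 := by decide
      apply Finset.add_subset_add hB hB
      rw [hBB, Finset.mem_Icc]; omega
    · rcases le_or_gt x 28 with hx28 | hx29
      · have hBD : ({0, 1, 2, 5, 8, 9, 10} : Finset ℤ) + {14, 15, 17, 18}
            = Finset.Icc 14 28 \ {21} := by decide
        apply Finset.add_subset_add hB hD
        rw [hBD]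
        simp only [Finset.mem_sdiff, Finset.mem_Icc, Finset.mem_singleton]
        omega
      · obtain ⟨m, r, hm2, hm2l, hr12, hr20, hmr⟩ :
            ∃ m r, 2 ≤ m ∧ m ≤ 2 * l ∧ 12 ≤ r ∧ r ≤ 20 ∧ 8 * m + r = x := by
          refine ⟨min ((x - 12) / 8) (2 * l), x - 8 * min ((x - 12) / 8) (2 * l),
            ?_, ?_, ?_, ?_, ?_⟩ <;> omega
        obtain ⟨i, j, hi1, hi2, hj1, hj2, hij⟩ :
            ∃ i j, 1 ≤ i ∧ i ≤ l ∧ 1 ≤ j ∧ j ≤ l ∧ i + j = m := by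
          refine ⟨max 1 (m - l), m - max 1 (m - l), ?_, ?_, ?_, ?_, ?_⟩ <;> omega
        obtain ⟨c1, c2, hc1, hc2, hcc⟩ : ∃ c1 c2 : ℤ,
            (c1 = 6 ∨ c1 = 7 ∨ c1 = 9 ∨ c1 = 10) ∧
            (c2 = 6 ∨ c2 = 7 ∨ c2 = 9 ∨ c2 = 10) ∧ c1 + c2 = r := by
          interval_cases r
          · exact ⟨6, 6, by tauto, by tauto, by norm_num⟩
          · exact ⟨6, 7, by tauto, by tauto, by norm_num⟩
          · exact ⟨7, 7, by tauto, by tauto, by norm_num⟩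
          · exact ⟨6, 9, by tauto, by tauto, by norm_num⟩
          · exact ⟨6, 10, by tauto, by tauto, by norm_num⟩
          · exact ⟨7, 10, by tauto, by tauto, by norm_num⟩
          · exact ⟨9, 9, by tauto, by tauto, by norm_num⟩
          · exact ⟨9, 10, by tauto, by tauto, by norm_num⟩
          · exact ⟨10, 10, by tauto, by tauto, by norm_num⟩
        rw [hA, Finset.mem_add]
        refine ⟨8 * i + c1, ?_, 8 * j + c2, ?_, by omega⟩ <;>
          simp only [Finset.mem_union, Finset.mem_insert, Finset.mem_singleton,
            Finset.mem_image₂, Finset.mem_Icc]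
        · exact Or.inr ⟨i, ⟨hi1, hi2⟩, c1, hc1, rfl⟩
        · exact Or.inr ⟨j, ⟨hj1, hj2⟩, c2, hc2, rfl⟩
end

section
/- For every integer l ≥ 1, the set A_{2l-1} = {0,1,2,5,8,9,10} ∪ {8k+c : 1 ≤ k ≤ l, c ∈ {6,7,9,10}} satisfies A_{2l-1} - A_{2l-1} = [-8l-10, 8l+10] \ {-8l-3, 8l+3}. -/
open Finset Pointwise

theorem stmt_13 (l : ℤ) (hl : 1 ≤ l) (A : Finset ℤ)
    (hA : A = ({0, 1, 2, 5, 8, 9, 10} : Finset ℤ) ∪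
      Finset.image₂ (fun k c => 8 * k + c) (Finset.Icc 1 l)
        ({6, 7, 9, 10} : Finset ℤ)) :
    A - A = Finset.Icc (-8 * l - 10) (8 * l + 10) \ {-8 * l - 3, 8 * l + 3} := by
  have memA : ∀ a : ℤ, a ∈ A ↔
      ((a = 0 ∨ a = 1 ∨ a = 2 ∨ a = 5 ∨ a = 8 ∨ a = 9 ∨ a = 10) ∨
        ∃ k : ℤ, (1 ≤ k ∧ k ≤ l) ∧
          (a = 8 * k + 6 ∨ a = 8 * k + 7 ∨ a = 8 * k + 9 ∨ a = 8 * k + 10)) := by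
    intro a
    subst hA
    simp only [Finset.mem_union, Finset.mem_insert, Finset.mem_singleton,
      Finset.mem_image₂, Finset.mem_Icc]
    constructor
    · rintro (h | ⟨k, hk, c, hc, hac⟩)
      · exact Or.inl h
      · exact Or.inr ⟨k, hk, by omega⟩
    · rintro (h | ⟨k, hk, h⟩)
      · exact Or.inl h
      · refine Or.inr ⟨k, hk, ?_⟩
        rcases h with h | h | h | h
        · exact ⟨6, by tauto, by omega⟩
        · exact ⟨7, by tauto, by omega⟩
        · exact ⟨9, by tauto, by omega⟩
        · exact ⟨10, by tauto, by omega⟩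
  have hsmall : ∀ y : ℤ, 0 ≤ y → y ≤ 10 →
      ∃ a b : ℤ, a ∈ A ∧ b ∈ A ∧ a - b = y := by
    intro y h0 h10
    interval_cases y
    · exact ⟨0, 0, by rw [memA]; omega, by rw [memA]; omega, by omega⟩
    · exact ⟨1, 0, by rw [memA]; omega, by rw [memA]; omega, by omega⟩
    · exact ⟨2, 0, by rw [memA]; omega, by rw [memA]; omega, by omega⟩
    · exact ⟨5, 2, by rw [memA]; omega, by rw [memA]; omega, by omega⟩
    · exact ⟨5, 1, by rw [memA]; omega, by rw [memA]; omega, by omega⟩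
    · exact ⟨5, 0, by rw [memA]; omega, by rw [memA]; omega, by omega⟩
    · exact ⟨8, 2, by rw [memA]; omega, by rw [memA]; omega, by omega⟩
    · exact ⟨8, 1, by rw [memA]; omega, by rw [memA]; omega, by omega⟩
    · exact ⟨8, 0, by rw [memA]; omega, by rw [memA]; omega, by omega⟩
    · exact ⟨9, 0, by rw [memA]; omega, by rw [memA]; omega, by omega⟩
    · exact ⟨10, 0, by rw [memA]; omega, by rw [memA]; omega, by omega⟩
  have hpos : ∀ y : ℤ, 11 ≤ y → y ≤ 8 * l + 10 → y ≠ 8 * l + 3 →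
      ∃ a b : ℤ, a ∈ A ∧ b ∈ A ∧ a - b = y := by
    intro y h11 hub hne
    obtain ⟨q, r, hqr, hr0, hr8⟩ : ∃ q r : ℤ, y - 3 = 8 * q + r ∧ 0 ≤ r ∧ r < 8 :=
      ⟨(y - 3) / 8, (y - 3) % 8, by rw [Int.mul_ediv_add_emod],
        Int.emod_nonneg _ (by norm_num), Int.emod_lt_of_pos _ (by norm_num)⟩
    interval_cases r
    · -- y = 8q + 3, need q+1 ≤ l
      exact ⟨8 * (q + 1) + 9, 8 * 1 + 6,
        by rw [memA]; exact Or.inr ⟨q + 1, by omega, by omega⟩,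
        by rw [memA]; exact Or.inr ⟨1, by omega, by omega⟩, by omega⟩
    · exact ⟨8 * q + 9, 5, by rw [memA]; exact Or.inr ⟨q, by omega, by omega⟩,
        by rw [memA]; omega, by omega⟩
    · exact ⟨8 * q + 10, 5, by rw [memA]; exact Or.inr ⟨q, by omega, by omega⟩,
        by rw [memA]; omega, by omega⟩
    · exact ⟨8 * q + 6, 0, by rw [memA]; exact Or.inr ⟨q, by omega, by omega⟩,
        by rw [memA]; omega, by omega⟩
    · exact ⟨8 * q + 7, 0, by rw [memA]; exact Or.inr ⟨q, by omega, by omega⟩,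
        by rw [memA]; omega, by omega⟩
    · exact ⟨8 * q + 9, 1, by rw [memA]; exact Or.inr ⟨q, by omega, by omega⟩,
        by rw [memA]; omega, by omega⟩
    · exact ⟨8 * q + 9, 0, by rw [memA]; exact Or.inr ⟨q, by omega, by omega⟩,
        by rw [memA]; omega, by omega⟩
    · exact ⟨8 * q + 10, 0, by rw [memA]; exact Or.inr ⟨q, by omega, by omega⟩,
        by rw [memA]; omega, by omega⟩
  ext x
  simp only [Finset.mem_sub, Finset.mem_sdiff, Finset.mem_Icc, Finset.mem_insert,
    Finset.mem_singleton]
  constructor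
  · rintro ⟨a, ha, b, hb, rfl⟩
    rw [memA] at ha hb
    rcases ha with ha | ⟨k, hk, ha⟩ <;> rcases hb with hb | ⟨k', hk', hb⟩ <;> omega
  · rintro ⟨⟨hlb, hub⟩, hne⟩
    push_neg at hne
    by_cases hx1 : 11 ≤ x
    · obtain ⟨a, b, ha, hb, hab⟩ := hpos x hx1 hub hne.2
      exact ⟨a, ha, b, hb, hab⟩
    · by_cases hx2 : x ≤ -11
      · obtain ⟨a, b, ha, hb, hab⟩ := hpos (-x) (by omega) (by omega) (by omega)
        exact ⟨b, hb, a, ha, by omega⟩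
      · by_cases hx3 : 0 ≤ x
        · obtain ⟨a, b, ha, hb, hab⟩ := hsmall x hx3 (by omega)
          exact ⟨a, ha, b, hb, hab⟩
        · obtain ⟨a, b, ha, hb, hab⟩ := hsmall (-x) (by omega) (by omega)
          exact ⟨b, hb, a, ha, by omega⟩
end

section
/- For every integer l ≥ 1, the set A_{2l-1} = {0,1,2,5,8,9,10} ∪ {8k+c : 1 ≤ k ≤ l, c ∈ {6,7,9,10}} is MSTD, with |A_{2l-1}+A_{2l-1}| = 16l+20 and |A_{2l-1}-A_{2l-1}| = 16l+19. -/
open Finset Pointwise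

theorem stmt_14 (l : ℤ) (hl : 1 ≤ l) (A : Finset ℤ)
    (hA : A = ({0, 1, 2, 5, 8, 9, 10} : Finset ℤ) ∪
      Finset.image₂ (fun k c => 8 * k + c) (Finset.Icc 1 l)
        ({6, 7, 9, 10} : Finset ℤ)) :
    ((A + A).card : ℤ) = 16 * l + 20 ∧ ((A - A).card : ℤ) = 16 * l + 19 ∧
    (A - A).card < (A + A).card := by
  have hmem : ∀ x : ℤ, x ∈ A ↔
      ((x = 0 ∨ x = 1 ∨ x = 2 ∨ x = 5 ∨ x = 8 ∨ x = 9 ∨ x = 10) ∨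
        ∃ k, 1 ≤ k ∧ k ≤ l ∧ (x = 8*k+6 ∨ x = 8*k+7 ∨ x = 8*k+9 ∨ x = 8*k+10)) := by
    intro x
    subst hA
    simp only [Finset.mem_union, Finset.mem_insert, Finset.mem_singleton,
      Finset.mem_image₂, Finset.mem_Icc]
    constructor
    · rintro (h | ⟨k, ⟨hk1, hk2⟩, c, hc, hx⟩)
      · exact Or.inl h
      · exact Or.inr ⟨k, hk1, hk2, by omega⟩
    · rintro (h | ⟨k, hk1, hk2, hx⟩)
      · exact Or.inl h
      · rcases hx with h | h | h | h
        · exact Or.inr ⟨k, ⟨hk1, hk2⟩, 6, by norm_num, by omega⟩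
        · exact Or.inr ⟨k, ⟨hk1, hk2⟩, 7, by norm_num, by omega⟩
        · exact Or.inr ⟨k, ⟨hk1, hk2⟩, 9, by norm_num, by omega⟩
        · exact Or.inr ⟨k, ⟨hk1, hk2⟩, 10, by norm_num, by omega⟩
  -- helper memberships
  have baseA : ∀ x : ℤ, (x = 0 ∨ x = 1 ∨ x = 2 ∨ x = 5 ∨ x = 8 ∨ x = 9 ∨ x = 10) → x ∈ A :=
    fun x h => (hmem x).2 (Or.inl h)
  have tailA : ∀ k c : ℤ, 1 ≤ k → k ≤ l → (c = 6 ∨ c = 7 ∨ c = 9 ∨ c = 10) →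
      8*k+c ∈ A := by
    intro k c h1 h2 hc
    exact (hmem _).2 (Or.inr ⟨k, h1, h2, by omega⟩)
  have hS : A + A = (Finset.Icc (0:ℤ) (16*l+20)).erase 21 := by
    ext n
    simp only [Finset.mem_add, Finset.mem_erase, Finset.mem_Icc]
    constructor
    · rintro ⟨a, ha, b, hb, rfl⟩
      rcases (hmem a).1 ha with h1 | ⟨i, hi1, hi2, h1⟩ <;>
        rcases (hmem b).1 hb with h2 | ⟨j, hj1, hj2, h2⟩ <;> omega
    · rintro ⟨hne, h0, hub⟩
      have pair : ∀ a b : ℤ, a ∈ A → b ∈ A → a + b = n →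
          ∃ x ∈ A, ∃ y ∈ A, x + y = n := fun a b ha hb h => ⟨a, ha, b, hb, h⟩
      rcases le_or_gt n 27 with hsmall | hbig
      · -- n ∈ [0,27] \ {21}
        have h14 : (14:ℤ) ∈ A := tailA 1 6 le_rfl hl (by norm_num)
        have h17 : (17:ℤ) ∈ A := tailA 1 9 le_rfl hl (by norm_num)
        interval_cases n
        · exact pair 0 0 (baseA 0 (by norm_num)) (baseA 0 (by norm_num)) (by norm_num)
        · exact pair 0 1 (baseA 0 (by norm_num)) (baseA 1 (by norm_num)) (by norm_num)
        · exact pair 0 2 (baseA 0 (by norm_num)) (baseA 2 (by norm_num)) (by norm_num)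
        · exact pair 1 2 (baseA 1 (by norm_num)) (baseA 2 (by norm_num)) (by norm_num)
        · exact pair 2 2 (baseA 2 (by norm_num)) (baseA 2 (by norm_num)) (by norm_num)
        · exact pair 0 5 (baseA 0 (by norm_num)) (baseA 5 (by norm_num)) (by norm_num)
        · exact pair 1 5 (baseA 1 (by norm_num)) (baseA 5 (by norm_num)) (by norm_num)
        · exact pair 2 5 (baseA 2 (by norm_num)) (baseA 5 (by norm_num)) (by norm_num)
        · exact pair 0 8 (baseA 0 (by norm_num)) (baseA 8 (by norm_num)) (by norm_num)
        · exact pair 0 9 (baseA 0 (by norm_num)) (baseA 9 (by norm_num)) (by norm_num)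
        · exact pair 0 10 (baseA 0 (by norm_num)) (baseA 10 (by norm_num)) (by norm_num)
        · exact pair 1 10 (baseA 1 (by norm_num)) (baseA 10 (by norm_num)) (by norm_num)
        · exact pair 2 10 (baseA 2 (by norm_num)) (baseA 10 (by norm_num)) (by norm_num)
        · exact pair 5 8 (baseA 5 (by norm_num)) (baseA 8 (by norm_num)) (by norm_num)
        · exact pair 5 9 (baseA 5 (by norm_num)) (baseA 9 (by norm_num)) (by norm_num)
        · exact pair 5 10 (baseA 5 (by norm_num)) (baseA 10 (by norm_num)) (by norm_num)
        · exact pair 8 8 (baseA 8 (by norm_num)) (baseA 8 (by norm_num)) (by norm_num)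
        · exact pair 8 9 (baseA 8 (by norm_num)) (baseA 9 (by norm_num)) (by norm_num)
        · exact pair 8 10 (baseA 8 (by norm_num)) (baseA 10 (by norm_num)) (by norm_num)
        · exact pair 9 10 (baseA 9 (by norm_num)) (baseA 10 (by norm_num)) (by norm_num)
        · exact pair 10 10 (baseA 10 (by norm_num)) (baseA 10 (by norm_num)) (by norm_num)
        · exact absurd rfl hne
        · exact pair 8 14 (baseA 8 (by norm_num)) h14 (by norm_num)
        · exact pair 9 14 (baseA 9 (by norm_num)) h14 (by norm_num)
        · exact pair 10 14 (baseA 10 (by norm_num)) h14 (by norm_num)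
        · exact pair 8 17 (baseA 8 (by norm_num)) h17 (by norm_num)
        · exact pair 9 17 (baseA 9 (by norm_num)) h17 (by norm_num)
        · exact pair 10 17 (baseA 10 (by norm_num)) h17 (by norm_num)
      · -- n ∈ [28, 16l+20]
        set s : ℤ := (n - 12) / 8 with hs
        have hr : 12 ≤ n - 8*s ∧ n - 8*s ≤ 19 := by omega
        rcases eq_or_lt_of_le (show s ≤ 2*l+1 by omega) with heq | hlt
        · -- s = 2l+1 forces n = 16l+20
          have hn : n = 16*l+20 := by omega
          exact pair (8*l+10) (8*l+10) (tailA l 10 hl le_rfl (by norm_num))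
            (tailA l 10 hl le_rfl (by norm_num)) (by omega)
        · obtain ⟨i, j, hi1, hi2, hj1, hj2, hij⟩ :
            ∃ i j : ℤ, 1 ≤ i ∧ i ≤ l ∧ 1 ≤ j ∧ j ≤ l ∧ i + j = s :=
            ⟨max (s-l) 1, s - max (s-l) 1, by omega, by omega, by omega, by omega, by omega⟩
          have hrc : n - 8*s = 12 ∨ n - 8*s = 13 ∨ n - 8*s = 14 ∨ n - 8*s = 15 ∨
              n - 8*s = 16 ∨ n - 8*s = 17 ∨ n - 8*s = 18 ∨ n - 8*s = 19 := by omega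
          rcases hrc with h | h | h | h | h | h | h | h
          · exact pair (8*i+6) (8*j+6) (tailA i 6 hi1 hi2 (by norm_num))
              (tailA j 6 hj1 hj2 (by norm_num)) (by omega)
          · exact pair (8*i+6) (8*j+7) (tailA i 6 hi1 hi2 (by norm_num))
              (tailA j 7 hj1 hj2 (by norm_num)) (by omega)
          · exact pair (8*i+7) (8*j+7) (tailA i 7 hi1 hi2 (by norm_num))
              (tailA j 7 hj1 hj2 (by norm_num)) (by omega)
          · exact pair (8*i+6) (8*j+9) (tailA i 6 hi1 hi2 (by norm_num))
              (tailA j 9 hj1 hj2 (by norm_num)) (by omega)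
          · exact pair (8*i+6) (8*j+10) (tailA i 6 hi1 hi2 (by norm_num))
              (tailA j 10 hj1 hj2 (by norm_num)) (by omega)
          · exact pair (8*i+7) (8*j+10) (tailA i 7 hi1 hi2 (by norm_num))
              (tailA j 10 hj1 hj2 (by norm_num)) (by omega)
          · exact pair (8*i+9) (8*j+9) (tailA i 9 hi1 hi2 (by norm_num))
              (tailA j 9 hj1 hj2 (by norm_num)) (by omega)
          · exact pair (8*i+9) (8*j+10) (tailA i 9 hi1 hi2 (by norm_num))
              (tailA j 10 hj1 hj2 (by norm_num)) (by omega)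
  have hD : A - A = ((Finset.Icc (-(8*l+10)) (8*l+10)).erase (8*l+3)).erase (-(8*l+3)) := by
    ext n
    simp only [Finset.mem_sub, Finset.mem_erase, Finset.mem_Icc]
    constructor
    · rintro ⟨a, ha, b, hb, rfl⟩
      rcases (hmem a).1 ha with h1 | ⟨i, hi1, hi2, h1⟩ <;>
        rcases (hmem b).1 hb with h2 | ⟨j, hj1, hj2, h2⟩ <;> omega
    · rintro ⟨hne1, hne2, hlb, hub⟩
      have pair : ∀ a b : ℤ, a ∈ A → b ∈ A → a - b = n →
          ∃ x ∈ A, ∃ y ∈ A, x - y = n := fun a b ha hb h => ⟨a, ha, b, hb, h⟩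
      rcases le_or_gt (8*l-3) n with hhi | hhi
      · -- n ∈ [8l-3, 8l+10] \ {8l+3}
        have ht : n - 8*l = -3 ∨ n - 8*l = -2 ∨ n - 8*l = -1 ∨ n - 8*l = 0 ∨
            n - 8*l = 1 ∨ n - 8*l = 2 ∨ n - 8*l = 4 ∨ n - 8*l = 5 ∨ n - 8*l = 6 ∨
            n - 8*l = 7 ∨ n - 8*l = 8 ∨ n - 8*l = 9 ∨ n - 8*l = 10 := by omega
        have T : ∀ c : ℤ, (c = 6 ∨ c = 7 ∨ c = 9 ∨ c = 10) → 8*l+c ∈ A :=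
          fun c hc => tailA l c hl le_rfl hc
        rcases ht with h | h | h | h | h | h | h | h | h | h | h | h | h
        · exact pair (8*l+6) 9 (T 6 (by norm_num)) (baseA 9 (by norm_num)) (by omega)
        · exact pair (8*l+6) 8 (T 6 (by norm_num)) (baseA 8 (by norm_num)) (by omega)
        · exact pair (8*l+7) 8 (T 7 (by norm_num)) (baseA 8 (by norm_num)) (by omega)
        · exact pair (8*l+9) 9 (T 9 (by norm_num)) (baseA 9 (by norm_num)) (by omega)
        · exact pair (8*l+6) 5 (T 6 (by norm_num)) (baseA 5 (by norm_num)) (by omega)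
        · exact pair (8*l+7) 5 (T 7 (by norm_num)) (baseA 5 (by norm_num)) (by omega)
        · exact pair (8*l+6) 2 (T 6 (by norm_num)) (baseA 2 (by norm_num)) (by omega)
        · exact pair (8*l+6) 1 (T 6 (by norm_num)) (baseA 1 (by norm_num)) (by omega)
        · exact pair (8*l+6) 0 (T 6 (by norm_num)) (baseA 0 (by norm_num)) (by omega)
        · exact pair (8*l+7) 0 (T 7 (by norm_num)) (baseA 0 (by norm_num)) (by omega)
        · exact pair (8*l+9) 1 (T 9 (by norm_num)) (baseA 1 (by norm_num)) (by omega)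
        · exact pair (8*l+9) 0 (T 9 (by norm_num)) (baseA 0 (by norm_num)) (by omega)
        · exact pair (8*l+10) 0 (T 10 (by norm_num)) (baseA 0 (by norm_num)) (by omega)
      rcases le_or_gt n (-(8*l-3)) with hlo | hlo
      · -- n ∈ [-(8l+10), -(8l-3)] \ {-(8l+3)}
        have ht : n + 8*l = 3 ∨ n + 8*l = 2 ∨ n + 8*l = 1 ∨ n + 8*l = 0 ∨
            n + 8*l = -1 ∨ n + 8*l = -2 ∨ n + 8*l = -4 ∨ n + 8*l = -5 ∨ n + 8*l = -6 ∨
            n + 8*l = -7 ∨ n + 8*l = -8 ∨ n + 8*l = -9 ∨ n + 8*l = -10 := by omega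
        have T : ∀ c : ℤ, (c = 6 ∨ c = 7 ∨ c = 9 ∨ c = 10) → 8*l+c ∈ A :=
          fun c hc => tailA l c hl le_rfl hc
        rcases ht with h | h | h | h | h | h | h | h | h | h | h | h | h
        · exact pair 9 (8*l+6) (baseA 9 (by norm_num)) (T 6 (by norm_num)) (by omega)
        · exact pair 8 (8*l+6) (baseA 8 (by norm_num)) (T 6 (by norm_num)) (by omega)
        · exact pair 8 (8*l+7) (baseA 8 (by norm_num)) (T 7 (by norm_num)) (by omega)
        · exact pair 9 (8*l+9) (baseA 9 (by norm_num)) (T 9 (by norm_num)) (by omega)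
        · exact pair 5 (8*l+6) (baseA 5 (by norm_num)) (T 6 (by norm_num)) (by omega)
        · exact pair 5 (8*l+7) (baseA 5 (by norm_num)) (T 7 (by norm_num)) (by omega)
        · exact pair 2 (8*l+6) (baseA 2 (by norm_num)) (T 6 (by norm_num)) (by omega)
        · exact pair 1 (8*l+6) (baseA 1 (by norm_num)) (T 6 (by norm_num)) (by omega)
        · exact pair 0 (8*l+6) (baseA 0 (by norm_num)) (T 6 (by norm_num)) (by omega)
        · exact pair 0 (8*l+7) (baseA 0 (by norm_num)) (T 7 (by norm_num)) (by omega)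
        · exact pair 1 (8*l+9) (baseA 1 (by norm_num)) (T 9 (by norm_num)) (by omega)
        · exact pair 0 (8*l+9) (baseA 0 (by norm_num)) (T 9 (by norm_num)) (by omega)
        · exact pair 0 (8*l+10) (baseA 0 (by norm_num)) (T 10 (by norm_num)) (by omega)
      · -- middle region: -(8l-4) ≤ n ≤ 8l-4, tail minus tail
        have key : ∀ d : ℤ, 1-l ≤ d → d ≤ l-1 → -4 ≤ n - 8*d → n - 8*d ≤ 4 →
            ∃ x ∈ A, ∃ y ∈ A, x - y = n := by
          intro d hd1 hd2 he1 he2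
          obtain ⟨i, j, hi1, hi2, hj1, hj2, hij⟩ :
              ∃ i j : ℤ, 1 ≤ i ∧ i ≤ l ∧ 1 ≤ j ∧ j ≤ l ∧ i - j = d :=
            ⟨max (d+1) 1, max (d+1) 1 - d, by omega, by omega, by omega, by omega, by omega⟩
          have he : n - 8*d = -4 ∨ n - 8*d = -3 ∨ n - 8*d = -2 ∨ n - 8*d = -1 ∨
              n - 8*d = 0 ∨ n - 8*d = 1 ∨ n - 8*d = 2 ∨ n - 8*d = 3 ∨ n - 8*d = 4 := by
            omega
          rcases he with h | h | h | h | h | h | h | h | h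
          · exact ⟨8*i+6, tailA i 6 hi1 hi2 (by norm_num), 8*j+10,
              tailA j 10 hj1 hj2 (by norm_num), by omega⟩
          · exact ⟨8*i+6, tailA i 6 hi1 hi2 (by norm_num), 8*j+9,
              tailA j 9 hj1 hj2 (by norm_num), by omega⟩
          · exact ⟨8*i+7, tailA i 7 hi1 hi2 (by norm_num), 8*j+9,
              tailA j 9 hj1 hj2 (by norm_num), by omega⟩
          · exact ⟨8*i+6, tailA i 6 hi1 hi2 (by norm_num), 8*j+7,
              tailA j 7 hj1 hj2 (by norm_num), by omega⟩
          · exact ⟨8*i+6, tailA i 6 hi1 hi2 (by norm_num), 8*j+6,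
              tailA j 6 hj1 hj2 (by norm_num), by omega⟩
          · exact ⟨8*i+7, tailA i 7 hi1 hi2 (by norm_num), 8*j+6,
              tailA j 6 hj1 hj2 (by norm_num), by omega⟩
          · exact ⟨8*i+9, tailA i 9 hi1 hi2 (by norm_num), 8*j+7,
              tailA j 7 hj1 hj2 (by norm_num), by omega⟩
          · exact ⟨8*i+9, tailA i 9 hi1 hi2 (by norm_num), 8*j+6,
              tailA j 6 hj1 hj2 (by norm_num), by omega⟩
          · exact ⟨8*i+10, tailA i 10 hi1 hi2 (by norm_num), 8*j+6,
              tailA j 6 hj1 hj2 (by norm_num), by omega⟩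
        rcases le_or_gt 0 n with hpos | hneg
        · exact key ((n+3)/8) (by omega) (by omega) (by omega) (by omega)
        · exact key ((n+4)/8) (by omega) (by omega) (by omega) (by omega)
  have hcard1 : ((A + A).card : ℤ) = 16*l + 20 := by
    have h21 : (21:ℤ) ∈ Finset.Icc (0:ℤ) (16*l+20) := by
      simp only [Finset.mem_Icc]; omega
    rw [hS, Finset.card_erase_of_mem h21]
    have := Int.card_Icc (0:ℤ) (16*l+20)
    have hpos : (Finset.Icc (0:ℤ) (16*l+20)).card = (16*l+21).toNat := by omega
    omega
  have hcard2 : ((A - A).card : ℤ) = 16*l + 19 := by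
    have h1 : (8*l+3 : ℤ) ∈ Finset.Icc (-(8*l+10)) (8*l+10) := by
      simp only [Finset.mem_Icc]; omega
    have h2 : (-(8*l+3) : ℤ) ∈ (Finset.Icc (-(8*l+10)) (8*l+10)).erase (8*l+3) := by
      simp only [Finset.mem_erase, Finset.mem_Icc]
      constructor
      · omega
      · omega
    rw [hD, Finset.card_erase_of_mem h2, Finset.card_erase_of_mem h1]
    have := Int.card_Icc (-(8*l+10) : ℤ) (8*l+10)
    omega
  refine ⟨hcard1, hcard2, ?_⟩
  omega
end

section
/- For every integer l ≥ 1, the set A_{2l} = A_{2l-1} ∪ {8l+14}, where A_{2l-1} = {0,1,2,5,8,9,10} ∪ {8k+c : 1 ≤ k ≤ l, c ∈ {6,7,9,10}}, is MDTS, with |A_{2l}+A_{2l}| = 16l+24 and |A_{2l}-A_{2l}| = 16l+25. -/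
open Finset Pointwise

theorem stmt_15 (l : ℤ) (hl : 1 ≤ l) (A B : Finset ℤ)
    (hA : A = ({0, 1, 2, 5, 8, 9, 10} : Finset ℤ) ∪
      Finset.image₂ (fun k c => 8 * k + c) (Finset.Icc 1 l)
        ({6, 7, 9, 10} : Finset ℤ))
    (hB : B = A ∪ {8 * l + 14}) :
    ((B + B).card : ℤ) = 16 * l + 24 ∧ ((B - B).card : ℤ) = 16 * l + 25 ∧
    (B + B).card < (B - B).card := by
  subst hB hA
  set A : Finset ℤ := ({0, 1, 2, 5, 8, 9, 10} : Finset ℤ) ∪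
      Finset.image₂ (fun k c => 8 * k + c) (Finset.Icc 1 l)
        ({6, 7, 9, 10} : Finset ℤ) with hA
  set B : Finset ℤ := A ∪ {8 * l + 14} with hB
  have hBmem : ∀ y : ℤ, y ∈ B ↔
      ((y = 0 ∨ y = 1 ∨ y = 2 ∨ y = 5 ∨ y = 8 ∨ y = 9 ∨ y = 10) ∨
        (∃ k : ℤ, (1 ≤ k ∧ k ≤ l) ∧
          (y = 8 * k + 6 ∨ y = 8 * k + 7 ∨ y = 8 * k + 9 ∨ y = 8 * k + 10)) ∨
        y = 8 * l + 14) := by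
    intro y
    simp only [hB, hA, Finset.mem_union, Finset.mem_insert, Finset.mem_singleton,
      Finset.mem_image₂, Finset.mem_Icc]
    constructor
    · rintro ((h | ⟨k, ⟨hk1, hk2⟩, c, hc, rfl⟩) | h)
      · exact Or.inl h
      · exact Or.inr (Or.inl ⟨k, ⟨hk1, hk2⟩, by omega⟩)
      · exact Or.inr (Or.inr h)
    · rintro (h | ⟨k, ⟨hk1, hk2⟩, h⟩ | h)
      · exact Or.inl (Or.inl h)
      · refine Or.inl (Or.inr ⟨k, ⟨hk1, hk2⟩, ?_⟩)
        rcases h with h | h | h | h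
        exacts [⟨6, by norm_num, by omega⟩, ⟨7, by norm_num, by omega⟩,
          ⟨9, by norm_num, by omega⟩, ⟨10, by norm_num, by omega⟩]
      · exact Or.inr h
  have hb : ∀ y : ℤ, (y = 0 ∨ y = 1 ∨ y = 2 ∨ y = 5 ∨ y = 8 ∨ y = 9 ∨ y = 10) → y ∈ B :=
    fun y h => (hBmem y).2 (Or.inl h)
  have hbk : ∀ k c : ℤ, 1 ≤ k → k ≤ l → (c = 6 ∨ c = 7 ∨ c = 9 ∨ c = 10) → 8 * k + c ∈ B :=
    fun k c h1 h2 hc => (hBmem _).2 (Or.inr (Or.inl ⟨k, ⟨h1, h2⟩, by omega⟩))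
  have hbt : (8 * l + 14) ∈ B := (hBmem _).2 (Or.inr (Or.inr rfl))
  have hS : B + B = (Finset.Icc (0:ℤ) 20 ∪ Finset.Icc 22 (16 * l + 21)) ∪
      {16 * l + 23, 16 * l + 24, 16 * l + 28} := by
    ext x
    simp only [Finset.mem_add, Finset.mem_union, Finset.mem_Icc, Finset.mem_insert,
      Finset.mem_singleton]
    constructor
    · rintro ⟨a, ha, b, hc, rfl⟩
      rw [hBmem] at ha hc
      rcases ha with h | ⟨k, ⟨hk1, hk2⟩, h⟩ | h <;>
        rcases hc with h' | ⟨j, ⟨hj1, hj2⟩, h'⟩ | h' <;> omega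
    · rintro ((⟨h0, h20⟩ | ⟨h22, hle⟩) | h | h | h)
      · rcases (show x = 0 ∨ x = 1 ∨ x = 2 ∨ x = 3 ∨ x = 4 ∨ x = 5 ∨ x = 6 ∨ x = 7 ∨ x = 8 ∨ x = 9 ∨ x = 10 ∨ x = 11 ∨ x = 12 ∨ x = 13 ∨ x = 14 ∨ x = 15 ∨ x = 16 ∨ x = 17 ∨ x = 18 ∨ x = 19 ∨ x = 20 from by omega) with rfl|rfl|rfl|rfl|rfl|rfl|rfl|rfl|rfl|rfl|rfl|rfl|rfl|rfl|rfl|rfl|rfl|rfl|rfl|rfl|rfl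
        · exact ⟨0, hb 0 (by norm_num), 0, hb 0 (by norm_num), by norm_num⟩
        · exact ⟨1, hb 1 (by norm_num), 0, hb 0 (by norm_num), by norm_num⟩
        · exact ⟨2, hb 2 (by norm_num), 0, hb 0 (by norm_num), by norm_num⟩
        · exact ⟨1, hb 1 (by norm_num), 2, hb 2 (by norm_num), by norm_num⟩
        · exact ⟨2, hb 2 (by norm_num), 2, hb 2 (by norm_num), by norm_num⟩
        · exact ⟨5, hb 5 (by norm_num), 0, hb 0 (by norm_num), by norm_num⟩
        · exact ⟨5, hb 5 (by norm_num), 1, hb 1 (by norm_num), by norm_num⟩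
        · exact ⟨5, hb 5 (by norm_num), 2, hb 2 (by norm_num), by norm_num⟩
        · exact ⟨8, hb 8 (by norm_num), 0, hb 0 (by norm_num), by norm_num⟩
        · exact ⟨9, hb 9 (by norm_num), 0, hb 0 (by norm_num), by norm_num⟩
        · exact ⟨10, hb 10 (by norm_num), 0, hb 0 (by norm_num), by norm_num⟩
        · exact ⟨9, hb 9 (by norm_num), 2, hb 2 (by norm_num), by norm_num⟩
        · exact ⟨10, hb 10 (by norm_num), 2, hb 2 (by norm_num), by norm_num⟩
        · exact ⟨5, hb 5 (by norm_num), 8, hb 8 (by norm_num), by norm_num⟩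
        · exact ⟨5, hb 5 (by norm_num), 9, hb 9 (by norm_num), by norm_num⟩
        · exact ⟨5, hb 5 (by norm_num), 10, hb 10 (by norm_num), by norm_num⟩
        · exact ⟨8, hb 8 (by norm_num), 8, hb 8 (by norm_num), by norm_num⟩
        · exact ⟨8, hb 8 (by norm_num), 9, hb 9 (by norm_num), by norm_num⟩
        · exact ⟨8, hb 8 (by norm_num), 10, hb 10 (by norm_num), by norm_num⟩
        · exact ⟨9, hb 9 (by norm_num), 10, hb 10 (by norm_num), by norm_num⟩
        · exact ⟨10, hb 10 (by norm_num), 10, hb 10 (by norm_num), by norm_num⟩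
      · by_cases hx : x ≤ 27
        · rcases (show x = 22 ∨ x = 23 ∨ x = 24 ∨ x = 25 ∨ x = 26 ∨ x = 27 from by omega) with
            rfl | rfl | rfl | rfl | rfl | rfl
          · exact ⟨8 * 1 + 6, hbk 1 6 le_rfl hl (by norm_num), 8, hb 8 (by norm_num), by norm_num⟩
          · exact ⟨8 * 1 + 6, hbk 1 6 le_rfl hl (by norm_num), 9, hb 9 (by norm_num), by norm_num⟩
          · exact ⟨8 * 1 + 6, hbk 1 6 le_rfl hl (by norm_num), 10, hb 10 (by norm_num), by norm_num⟩
          · exact ⟨8 * 1 + 7, hbk 1 7 le_rfl hl (by norm_num), 10, hb 10 (by norm_num), by norm_num⟩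
          · exact ⟨8 * 1 + 9, hbk 1 9 le_rfl hl (by norm_num), 9, hb 9 (by norm_num), by norm_num⟩
          · exact ⟨8 * 1 + 9, hbk 1 9 le_rfl hl (by norm_num), 10, hb 10 (by norm_num), by norm_num⟩
        · by_cases hx2 : x = 16 * l + 21
          · exact ⟨8 * l + 14, hbt, 8 * l + 7, hbk l 7 hl le_rfl (by norm_num), by omega⟩
          · -- 28 ≤ x ≤ 16l+20
            obtain ⟨k, j, hk1, hk2, hj1, hj2, hkj⟩ :
                ∃ k j : ℤ, 1 ≤ k ∧ k ≤ l ∧ 1 ≤ j ∧ j ≤ l ∧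
                  12 ≤ x - 8 * (k + j) ∧ x - 8 * (k + j) ≤ 20 := by
              rcases le_or_gt ((x - 12) / 8 - 1) l with hml | hml
              · exact ⟨1, (x - 12) / 8 - 1, by omega, by omega, by omega, by omega, by omega,
                  by omega⟩
              · rcases le_or_gt ((x - 12) / 8) (2 * l) with hml2 | hml2
                · exact ⟨(x - 12) / 8 - l, l, by omega, by omega, by omega, by omega, by omega,
                    by omega⟩
                · exact ⟨l, l, by omega, by omega, by omega, by omega, by omega, by omega⟩
            rcases (show x - 8 * (k + j) = 12 ∨ x - 8 * (k + j) = 13 ∨ x - 8 * (k + j) = 14 ∨ x - 8 * (k + j) = 15 ∨ x - 8 * (k + j) = 16 ∨ x - 8 * (k + j) = 17 ∨ x - 8 * (k + j) = 18 ∨ x - 8 * (k + j) = 19 ∨ x - 8 * (k + j) = 20 from by omega) with hr|hr|hr|hr|hr|hr|hr|hr|hr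
            · exact ⟨8 * k + 6, hbk k 6 hk1 hk2 (by norm_num), 8 * j + 6, hbk j 6 hj1 hj2 (by norm_num), by omega⟩
            · exact ⟨8 * k + 6, hbk k 6 hk1 hk2 (by norm_num), 8 * j + 7, hbk j 7 hj1 hj2 (by norm_num), by omega⟩
            · exact ⟨8 * k + 7, hbk k 7 hk1 hk2 (by norm_num), 8 * j + 7, hbk j 7 hj1 hj2 (by norm_num), by omega⟩
            · exact ⟨8 * k + 6, hbk k 6 hk1 hk2 (by norm_num), 8 * j + 9, hbk j 9 hj1 hj2 (by norm_num), by omega⟩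
            · exact ⟨8 * k + 6, hbk k 6 hk1 hk2 (by norm_num), 8 * j + 10, hbk j 10 hj1 hj2 (by norm_num), by omega⟩
            · exact ⟨8 * k + 7, hbk k 7 hk1 hk2 (by norm_num), 8 * j + 10, hbk j 10 hj1 hj2 (by norm_num), by omega⟩
            · exact ⟨8 * k + 9, hbk k 9 hk1 hk2 (by norm_num), 8 * j + 9, hbk j 9 hj1 hj2 (by norm_num), by omega⟩
            · exact ⟨8 * k + 9, hbk k 9 hk1 hk2 (by norm_num), 8 * j + 10, hbk j 10 hj1 hj2 (by norm_num), by omega⟩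
            · exact ⟨8 * k + 10, hbk k 10 hk1 hk2 (by norm_num), 8 * j + 10, hbk j 10 hj1 hj2 (by norm_num), by omega⟩
      · exact ⟨8 * l + 14, hbt, 8 * l + 9, hbk l 9 hl le_rfl (by norm_num), by omega⟩
      · exact ⟨8 * l + 14, hbt, 8 * l + 10, hbk l 10 hl le_rfl (by norm_num), by omega⟩
      · exact ⟨8 * l + 14, hbt, 8 * l + 14, hbt, by omega⟩
  have hD : B - B = Finset.Icc (-(8 * l + 14)) (8 * l + 14) \
      ({8 * l + 3, 8 * l + 11, -(8 * l + 3), -(8 * l + 11)} : Finset ℤ) := by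
    have key : ∀ d : ℤ, 0 ≤ d → d ≤ 8 * l + 14 → d ≠ 8 * l + 3 → d ≠ 8 * l + 11 →
        ∃ a ∈ B, ∃ c ∈ B, a - c = d := by
      intro d hd0 hd1 hd2 hd3
      by_cases h10 : d ≤ 10
      · rcases (show d = 0 ∨ d = 1 ∨ d = 2 ∨ d = 3 ∨ d = 4 ∨ d = 5 ∨ d = 6 ∨ d = 7 ∨ d = 8 ∨ d = 9 ∨ d = 10 from by omega) with rfl|rfl|rfl|rfl|rfl|rfl|rfl|rfl|rfl|rfl|rfl
        · exact ⟨0, hb 0 (by norm_num), 0, hb 0 (by norm_num), by norm_num⟩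
        · exact ⟨1, hb 1 (by norm_num), 0, hb 0 (by norm_num), by norm_num⟩
        · exact ⟨2, hb 2 (by norm_num), 0, hb 0 (by norm_num), by norm_num⟩
        · exact ⟨5, hb 5 (by norm_num), 2, hb 2 (by norm_num), by norm_num⟩
        · exact ⟨5, hb 5 (by norm_num), 1, hb 1 (by norm_num), by norm_num⟩
        · exact ⟨5, hb 5 (by norm_num), 0, hb 0 (by norm_num), by norm_num⟩
        · exact ⟨8, hb 8 (by norm_num), 2, hb 2 (by norm_num), by norm_num⟩
        · exact ⟨8, hb 8 (by norm_num), 1, hb 1 (by norm_num), by norm_num⟩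
        · exact ⟨8, hb 8 (by norm_num), 0, hb 0 (by norm_num), by norm_num⟩
        · exact ⟨9, hb 9 (by norm_num), 0, hb 0 (by norm_num), by norm_num⟩
        · exact ⟨10, hb 10 (by norm_num), 0, hb 0 (by norm_num), by norm_num⟩
      · by_cases hge : 8 * l + 12 ≤ d
        · exact ⟨8 * l + 14, hbt, 8 * l + 14 - d, hb _ (by omega), by omega⟩
        · by_cases hmod : d % 8 = 3
          · -- d = 8m+3, 1 ≤ m ≤ l - 1
            refine ⟨8 * ((d - 3) / 8 + 1) + 9, hbk _ 9 (by omega) (by omega) (by norm_num),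
              8 * 1 + 6, hbk 1 6 le_rfl hl (by norm_num), by omega⟩
          · -- 12 ≤ d ≤ 8l+10, d % 8 ≠ 3 ; k = (d-4)/8, r = d - 8k ∈ [4,10]
            have hk1 : 1 ≤ (d - 4) / 8 := by omega
            have hk2 : (d - 4) / 8 ≤ l := by omega
            rcases (show d - 8 * ((d - 4) / 8) = 4 ∨ d - 8 * ((d - 4) / 8) = 5 ∨ d - 8 * ((d - 4) / 8) = 6 ∨ d - 8 * ((d - 4) / 8) = 7 ∨ d - 8 * ((d - 4) / 8) = 8 ∨ d - 8 * ((d - 4) / 8) = 9 ∨ d - 8 * ((d - 4) / 8) = 10 from by omega) with hr|hr|hr|hr|hr|hr|hr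
            · exact ⟨8 * ((d - 4) / 8) + 9, hbk _ 9 hk1 hk2 (by norm_num), 5, hb 5 (by norm_num), by omega⟩
            · exact ⟨8 * ((d - 4) / 8) + 10, hbk _ 10 hk1 hk2 (by norm_num), 5, hb 5 (by norm_num), by omega⟩
            · exact ⟨8 * ((d - 4) / 8) + 6, hbk _ 6 hk1 hk2 (by norm_num), 0, hb 0 (by norm_num), by omega⟩
            · exact ⟨8 * ((d - 4) / 8) + 7, hbk _ 7 hk1 hk2 (by norm_num), 0, hb 0 (by norm_num), by omega⟩
            · exact ⟨8 * ((d - 4) / 8) + 9, hbk _ 9 hk1 hk2 (by norm_num), 1, hb 1 (by norm_num), by omega⟩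
            · exact ⟨8 * ((d - 4) / 8) + 9, hbk _ 9 hk1 hk2 (by norm_num), 0, hb 0 (by norm_num), by omega⟩
            · exact ⟨8 * ((d - 4) / 8) + 10, hbk _ 10 hk1 hk2 (by norm_num), 0, hb 0 (by norm_num), by omega⟩
    ext x
    simp only [Finset.mem_sub, Finset.mem_sdiff, Finset.mem_Icc, Finset.mem_insert,
      Finset.mem_singleton]
    constructor
    · rintro ⟨a, ha, c, hc, rfl⟩
      rw [hBmem] at ha hc
      rcases ha with h | ⟨k, ⟨hk1, hk2⟩, h⟩ | h <;>
        rcases hc with h' | ⟨j, ⟨hj1, hj2⟩, h'⟩ | h' <;>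
        refine ⟨by omega, by omega⟩
    · rintro ⟨⟨hx1, hx2⟩, hx3⟩
      push_neg at hx3
      rcases le_or_gt 0 x with hx0 | hx0
      · exact key x hx0 (by omega) (by omega) (by omega)
      · obtain ⟨a, ha, c, hc, h⟩ := key (-x) (by omega) (by omega) (by omega) (by omega)
        exact ⟨c, hc, a, ha, by omega⟩
  have hdisj1 : Disjoint (Finset.Icc (0:ℤ) 20) (Finset.Icc 22 (16 * l + 21)) := by
    simp only [Finset.disjoint_left, Finset.mem_Icc]
    intro a h1 h2
    omega
  have hdisj2 : Disjoint (Finset.Icc (0:ℤ) 20 ∪ Finset.Icc 22 (16 * l + 21))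
      ({16 * l + 23, 16 * l + 24, 16 * l + 28} : Finset ℤ) := by
    simp only [Finset.disjoint_left, Finset.mem_union, Finset.mem_Icc, Finset.mem_insert,
      Finset.mem_singleton]
    intro a h1 h2
    omega
  have hcard3 : ({16 * l + 23, 16 * l + 24, 16 * l + 28} : Finset ℤ).card = 3 := by
    rw [Finset.card_insert_of_notMem (by simp only [Finset.mem_insert, Finset.mem_singleton]; omega),
      Finset.card_insert_of_notMem (by simp only [Finset.mem_singleton]; omega),
      Finset.card_singleton]
  have hsub : ({8 * l + 3, 8 * l + 11, -(8 * l + 3), -(8 * l + 11)} : Finset ℤ) ⊆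
      Finset.Icc (-(8 * l + 14)) (8 * l + 14) := by
    intro a ha
    simp only [Finset.mem_insert, Finset.mem_singleton] at ha
    simp only [Finset.mem_Icc]
    omega
  have hcard4 : ({8 * l + 3, 8 * l + 11, -(8 * l + 3), -(8 * l + 11)} : Finset ℤ).card = 4 := by
    rw [Finset.card_insert_of_notMem (by simp only [Finset.mem_insert, Finset.mem_singleton]; omega),
      Finset.card_insert_of_notMem (by simp only [Finset.mem_insert, Finset.mem_singleton]; omega),
      Finset.card_insert_of_notMem (by simp only [Finset.mem_singleton]; omega),
      Finset.card_singleton]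
  have h1 : ((B + B).card : ℤ) = 16 * l + 24 := by
    rw [hS, Finset.card_union_of_disjoint hdisj2, Finset.card_union_of_disjoint hdisj1,
      hcard3, Int.card_Icc, Int.card_Icc]
    omega
  have h2 : ((B - B).card : ℤ) = 16 * l + 25 := by
    rw [hD, Finset.card_sdiff_of_subset hsub, hcard4, Int.card_Icc]
    omega
  exact ⟨h1, h2, by omega⟩
end

section
/- There exists an infinite strictly increasing chain of finite sets of integers A₁ ⊂ A₂ ⊂ A₃ ⊂ ⋯ such that A_i is MSTD for all odd i and MDTS for all even i. -/
open Finset Pointwise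

/-!
Take `A = L ∪ [8, n - 8] ∪ (n - R)` with fringes `L, R ⊆ [0, 7]`. The full middle interval
produces every sum and difference away from the extremes, so only those depend on the fringes:
sums near `0` and `2n` come from `L + L` and `R + R`, differences near `±n` from `L + R`.
With `L = {0, 1, 2, 5}`, the fringe `R = {0, 1, 3, 4}` gives `A + A = [0, 2n]` while
`7 ∉ L + R` removes `n - 7` from `A - A`; the fringe `R = {0, 1, 2}` gives `A - A = [-n, n]`
while `5 ∉ R + R` removes `2n - 5` from `A + A`. As `A ⊆ [0, n]` forces `A + A ⊆ [0, 2n]` and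
`A - A ⊆ [-n, n]`, intervals of the same size, one missing element decides the comparison.
Raising `n` by `8` swallows the previous set into the middle interval, so alternating the two
fringes along `n = 8i + 16` gives a strictly increasing chain.
-/

section IntervalBounds

variable {A : Finset ℤ} {n : ℤ}

theorem add_subset_Icc_of_subset_Icc (h : A ⊆ Icc 0 n) : A + A ⊆ Icc 0 (2 * n) := by
  simpa [two_mul] using (add_subset_add h h).trans (Icc_add_Icc_subset 0 n 0 n)

theorem sub_subset_Icc_of_subset_Icc (h : A ⊆ Icc 0 n) : A - A ⊆ Icc (-n) n := by
  intro d hd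
  obtain ⟨a, ha, b, hb, rfl⟩ := mem_sub.1 hd
  have := mem_Icc.1 (h ha)
  have := mem_Icc.1 (h hb)
  rw [mem_Icc]
  omega

theorem card_Icc_neg_self (n : ℤ) : #(Icc (-n) n) = #(Icc 0 (2 * n)) := by
  simp only [Int.card_Icc]
  congr 1
  ring

theorem card_sub_lt_card_add_of_add_eq_Icc (h : A ⊆ Icc 0 n) (hadd : A + A = Icc 0 (2 * n))
    {d : ℤ} (hd : d ∈ Icc (-n) n) (hdA : d ∉ A - A) : #(A - A) < #(A + A) :=
  calc #(A - A) < #(Icc (-n) n) :=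
        card_lt_card ((ssubset_iff_of_subset (sub_subset_Icc_of_subset_Icc h)).2 ⟨d, hd, hdA⟩)
    _ = #(A + A) := by rw [hadd, card_Icc_neg_self]

theorem card_add_lt_card_sub_of_sub_eq_Icc (h : A ⊆ Icc 0 n) (hsub : A - A = Icc (-n) n)
    {s : ℤ} (hs : s ∈ Icc 0 (2 * n)) (hsA : s ∉ A + A) : #(A + A) < #(A - A) :=
  calc #(A + A) < #(Icc 0 (2 * n)) :=
        card_lt_card ((ssubset_iff_of_subset (add_subset_Icc_of_subset_Icc h)).2 ⟨s, hs, hsA⟩)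
    _ = #(A - A) := by rw [hsub, card_Icc_neg_self]

end IntervalBounds

noncomputable def fringed (L R : Finset ℤ) (n : ℤ) : Finset ℤ :=
  L ∪ Icc 8 (n - 8) ∪ R.image (n - ·)

section Fringed

variable {L R : Finset ℤ} {n x : ℤ}

theorem mem_fringed :
    x ∈ fringed L R n ↔ x ∈ L ∨ (8 ≤ x ∧ x ≤ n - 8) ∨ n - x ∈ R := by
  simp only [fringed, mem_union, mem_Icc, mem_image, or_assoc]
  refine or_congr_right (or_congr_right ⟨?_, fun h => ⟨n - x, h, by ring⟩⟩)
  rintro ⟨r, hr, rfl⟩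
  simpa using hr

theorem mem_fringed_of_mem_left (hx : x ∈ L) : x ∈ fringed L R n :=
  mem_fringed.2 (Or.inl hx)

theorem mem_fringed_of_le_of_le (h₁ : 8 ≤ x) (h₂ : x ≤ n - 8) : x ∈ fringed L R n :=
  mem_fringed.2 (Or.inr (Or.inl ⟨h₁, h₂⟩))

theorem sub_mem_fringed {r : ℤ} (hr : r ∈ R) : n - r ∈ fringed L R n :=
  mem_fringed.2 (Or.inr (Or.inr (by simpa)))

theorem self_mem_fringed (hR : 0 ∈ R) : n ∈ fringed L R n := by
  simpa using sub_mem_fringed (L := L) (n := n) hR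

theorem mem_fringed_cases (hL : L ⊆ Icc 0 7) (hR : R ⊆ Icc 0 7) (hx : x ∈ fringed L R n) :
    (x ∈ L ∧ 0 ≤ x ∧ x ≤ 7) ∨ (8 ≤ x ∧ x ≤ n - 8) ∨ (n - x ∈ R ∧ n - 7 ≤ x ∧ x ≤ n) := by
  rcases mem_fringed.1 hx with hxL | hxM | hxR
  · exact Or.inl ⟨hxL, mem_Icc.1 (hL hxL)⟩
  · exact Or.inr (Or.inl hxM)
  · have := mem_Icc.1 (hR hxR)
    exact Or.inr (Or.inr ⟨hxR, by omega, by omega⟩)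

theorem fringed_subset_Icc (hL : L ⊆ Icc 0 7) (hR : R ⊆ Icc 0 7) (hn : 7 ≤ n) :
    fringed L R n ⊆ Icc 0 n := fun x hx => by
  rw [mem_Icc]
  rcases mem_fringed_cases hL hR hx with h | h | h <;> omega

theorem zero_mem_of_zero_mem_add {a b : ℤ} (hL : L ⊆ Icc 0 a) (hR : R ⊆ Icc 0 b)
    (h : (0 : ℤ) ∈ L + R) : (0 : ℤ) ∈ L ∧ (0 : ℤ) ∈ R := by
  obtain ⟨l, hl, r, hr, hlr⟩ := mem_add.1 h
  have := mem_Icc.1 (hL hl)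
  have := mem_Icc.1 (hR hr)
  exact ⟨by rwa [show l = 0 by omega] at hl, by rwa [show r = 0 by omega] at hr⟩

theorem fringed_add_fringed (hL : L ⊆ Icc 0 7) (hR : R ⊆ Icc 0 7)
    (hLL : Icc 0 7 ⊆ L + L) (hRR : Icc 0 7 ⊆ R + R) (hn : 24 ≤ n) :
    fringed L R n + fringed L R n = Icc 0 (2 * n) := by
  have hL₀ := (zero_mem_of_zero_mem_add hL hL (hLL (by simp))).1
  have hR₀ := (zero_mem_of_zero_mem_add hR hR (hRR (by simp))).1
  refine (add_subset_Icc_of_subset_Icc (fringed_subset_Icc hL hR (by omega))).antisymm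
    fun s hs => ?_
  rw [mem_Icc] at hs
  rw [mem_add]
  by_cases hs₁ : s ≤ 7
  · obtain ⟨a, ha, b, hb, hab⟩ := mem_add.1 (hLL (mem_Icc.2 ⟨hs.1, hs₁⟩))
    exact ⟨a, mem_fringed_of_mem_left ha, b, mem_fringed_of_mem_left hb, hab⟩
  by_cases hs₂ : s ≤ n - 8
  · exact ⟨0, mem_fringed_of_mem_left hL₀, s, mem_fringed_of_le_of_le (by omega) hs₂, by ring⟩
  by_cases hs₃ : s ≤ n
  · exact ⟨8, mem_fringed_of_le_of_le le_rfl (by omega), s - 8,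
      mem_fringed_of_le_of_le (by omega) (by omega), by ring⟩
  by_cases hs₄ : s ≤ 2 * n - 16
  · exact ⟨s - (n - 8), mem_fringed_of_le_of_le (by omega) (by omega), n - 8,
      mem_fringed_of_le_of_le (by omega) le_rfl, by ring⟩
  by_cases hs₅ : s ≤ 2 * n - 8
  · exact ⟨s - n, mem_fringed_of_le_of_le (by omega) (by omega), n,
      self_mem_fringed hR₀, by ring⟩
  obtain ⟨r, hr, r', hr', hrr'⟩ := mem_add.1 (hRR (mem_Icc.2 ⟨by omega, by omega⟩ :
    2 * n - s ∈ Icc 0 7))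
  exact ⟨n - r, sub_mem_fringed hr, n - r', sub_mem_fringed hr', by omega⟩

theorem fringed_sub_fringed (hL : L ⊆ Icc 0 7) (hR : R ⊆ Icc 0 7)
    (hLR : Icc 0 7 ⊆ L + R) (hn : 24 ≤ n) :
    fringed L R n - fringed L R n = Icc (-n) n := by
  have hR₀ := (zero_mem_of_zero_mem_add hL hR (hLR (by simp))).2
  have hnonneg : ∀ d, 0 ≤ d → d ≤ n → d ∈ fringed L R n - fringed L R n := by
    intro d hd₀ hdn
    rw [mem_sub]
    by_cases hd₁ : d ≤ n - 16
    · exact ⟨d + 8, mem_fringed_of_le_of_le (by omega) (by omega), 8,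
        mem_fringed_of_le_of_le le_rfl (by omega), by ring⟩
    by_cases hd₂ : d ≤ n - 8
    · exact ⟨n, self_mem_fringed hR₀, n - d,
        mem_fringed_of_le_of_le (by omega) (by omega), by ring⟩
    obtain ⟨l, hl, r, hr, hlr⟩ := mem_add.1 (hLR (mem_Icc.2 ⟨by omega, by omega⟩ :
      n - d ∈ Icc 0 7))
    exact ⟨n - r, sub_mem_fringed hr, l, mem_fringed_of_mem_left hl, by omega⟩
  refine (sub_subset_Icc_of_subset_Icc (fringed_subset_Icc hL hR (by omega))).antisymm
    fun d hd => ?_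
  rw [mem_Icc] at hd
  rcases le_total 0 d with hd₀ | hd₀
  · exact hnonneg d hd₀ hd.2
  obtain ⟨a, ha, b, hb, hab⟩ := mem_sub.1 (hnonneg (-d) (by omega) (by omega))
  exact mem_sub.2 ⟨b, hb, a, ha, by omega⟩

theorem sub_notMem_fringed_sub_fringed (hL : L ⊆ Icc 0 7) (hR : R ⊆ Icc 0 7) {k : ℤ}
    (hk₇ : k ≤ 7) (hk : k ∉ L + R) (hn : 15 ≤ n) :
    n - k ∉ fringed L R n - fringed L R n := by
  rintro hd
  obtain ⟨a, ha, b, hb, hab⟩ := mem_sub.1 hd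
  have := mem_Icc.1 (fringed_subset_Icc hL hR (by omega) ha)
  have := mem_Icc.1 (fringed_subset_Icc hL hR (by omega) hb)
  rcases mem_fringed_cases hL hR ha with ⟨-, -, ha₇⟩ | ⟨-, ha₈⟩ | ⟨haR, -, -⟩
  · omega
  · omega
  rcases mem_fringed_cases hL hR hb with ⟨hbL, -, -⟩ | ⟨hb₈, -⟩ | ⟨-, hb₇, -⟩
  · exact hk (mem_add.2 ⟨b, hbL, n - a, haR, by omega⟩)
  · omega
  · omega

theorem two_mul_sub_notMem_fringed_add_fringed (hL : L ⊆ Icc 0 7) (hR : R ⊆ Icc 0 7) {k : ℤ}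
    (hk₇ : k ≤ 7) (hk : k ∉ R + R) (hn : 15 ≤ n) :
    2 * n - k ∉ fringed L R n + fringed L R n := by
  rintro hs
  obtain ⟨a, ha, b, hb, hab⟩ := mem_add.1 hs
  have := mem_Icc.1 (fringed_subset_Icc hL hR (by omega) ha)
  have := mem_Icc.1 (fringed_subset_Icc hL hR (by omega) hb)
  rcases mem_fringed_cases hL hR ha with ⟨-, -, ha₇⟩ | ⟨-, ha₈⟩ | ⟨haR, -, -⟩
  · omega
  · omega
  rcases mem_fringed_cases hL hR hb with ⟨-, -, hb₇⟩ | ⟨-, hb₈⟩ | ⟨hbR, -, -⟩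
  · omega
  · omega
  · exact hk (mem_add.2 ⟨n - a, haR, n - b, hbR, by omega⟩)

theorem card_fringed_sub_lt_card_add (hL : L ⊆ Icc 0 7) (hR : R ⊆ Icc 0 7)
    (hLL : Icc 0 7 ⊆ L + L) (hRR : Icc 0 7 ⊆ R + R) {k : ℤ} (hk₀ : 0 ≤ k) (hk₇ : k ≤ 7)
    (hk : k ∉ L + R) (hn : 24 ≤ n) :
    #(fringed L R n - fringed L R n) < #(fringed L R n + fringed L R n) :=
  card_sub_lt_card_add_of_add_eq_Icc (fringed_subset_Icc hL hR (by omega))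
    (fringed_add_fringed hL hR hLL hRR hn) (d := n - k) (mem_Icc.2 ⟨by omega, by omega⟩)
    (sub_notMem_fringed_sub_fringed hL hR hk₇ hk (by omega))

theorem card_fringed_add_lt_card_sub (hL : L ⊆ Icc 0 7) (hR : R ⊆ Icc 0 7)
    (hLR : Icc 0 7 ⊆ L + R) {k : ℤ} (hk₀ : 0 ≤ k) (hk₇ : k ≤ 7) (hk : k ∉ R + R)
    (hn : 24 ≤ n) :
    #(fringed L R n + fringed L R n) < #(fringed L R n - fringed L R n) :=
  card_add_lt_card_sub_of_sub_eq_Icc (fringed_subset_Icc hL hR (by omega))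
    (fringed_sub_fringed hL hR hLR hn) (s := 2 * n - k) (mem_Icc.2 ⟨by omega, by omega⟩)
    (two_mul_sub_notMem_fringed_add_fringed hL hR hk₇ hk (by omega))

theorem fringed_ssubset_fringed {L' R' : Finset ℤ} {n' : ℤ} (hL : L ⊆ Icc 0 7)
    (hR : R ⊆ Icc 0 7) (hLL' : L ⊆ L') (hR' : 0 ∈ R') (hn : 15 ≤ n) (hnn' : n + 8 ≤ n') :
    fringed L R n ⊂ fringed L' R' n' := by
  refine (ssubset_iff_of_subset fun x hx => ?_).2 ⟨n', self_mem_fringed hR', ?_⟩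
  · rcases mem_fringed_cases hL hR hx with ⟨hxL, -⟩ | ⟨hx₈, hxn⟩ | ⟨-, hx₇, hxn⟩
    · exact mem_fringed_of_mem_left (hLL' hxL)
    · exact mem_fringed_of_le_of_le hx₈ (by omega)
    · exact mem_fringed_of_le_of_le (by omega) (by omega)
  · intro hn'
    have := mem_Icc.1 (fringed_subset_Icc hL hR (by omega) hn')
    omega

end Fringed

noncomputable def alternatingChain (i : ℕ) : Finset ℤ :=
  fringed {0, 1, 2, 5} (if Odd i then {0, 1, 3, 4} else {0, 1, 2}) (8 * i + 16)

theorem stmt_16 :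
    ∃ A : ℕ → Finset ℤ,
      (∀ i, 1 ≤ i → A i ⊂ A (i + 1)) ∧
      (∀ i, 1 ≤ i → Odd i → (A i - A i).card < (A i + A i).card) ∧
      (∀ i, 1 ≤ i → Even i → (A i + A i).card < (A i - A i).card) := by
  refine ⟨alternatingChain, fun i _ => ?_, fun i hi hodd => ?_, fun i hi heven => ?_⟩
  · exact fringed_ssubset_fringed (by decide) (by split_ifs <;> decide) subset_rfl
      (by split_ifs <;> decide) (by omega) (by push_cast; omega)
  · rw [alternatingChain, if_pos hodd]
    exact card_fringed_sub_lt_card_add (k := 7) (by decide) (by decide) (by decide) (by decide)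
      (by norm_num) le_rfl (by decide) (by omega)
  · rw [alternatingChain, if_neg (Nat.not_odd_iff_even.2 heven)]
    exact card_fringed_add_lt_card_sub (k := 5) (by decide) (by decide) (by decide)
      (by norm_num) (by norm_num) (by decide) (by omega)
end

section
/- Adding the element 8l+14 to A_{2l-1} = {0,1,2,5,8,9,10} ∪ {8k+c : 1 ≤ k ≤ l, c ∈ {6,7,9,10}} creates exactly 4 new sums and exactly 6 new differences; the new sums are {16l+21, 16l+23, 16l+24, 16l+28} and the new differences are ±{8l+12, 8l+13, 8l+14}. -/
/-!
`A = A_{2l-1}` lies in `[0, 8l+10]`, so for `x = 8l+14` every new sum is `2x` or some `x + a`,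
and every new difference is `±(x - a)`, with `a ∈ A`. Each `x + a` already lies in `A + A`
except for the three largest `a`, because the residue of `a` modulo 8 can be moved into the top
block `8l + {6, 7, 9, 10}`: for instance `x + (8k+7) = (8(k+1)+6) + (8l+7)`. Likewise each
`x - a` lies in `A - A` except for `a ∈ {0, 1, 2}`. The exceptional values exceed the bounds
`16l+20` and `8l+10` of `A + A` and `A - A`, so they are indeed new.
-/

open Finset Pointwise

theorem mem_union_singleton_add_sdiff {G : Type*} [AddCommMagma G] [DecidableEq G]
    {s : Finset G} {x y : G} :
    y ∈ (s ∪ {x} + (s ∪ {x})) \ (s + s) ↔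
      (x + x ∉ s + s ∧ y = x + x) ∨ ∃ a ∈ s, x + a ∉ s + s ∧ y = x + a := by
  simp only [mem_sdiff, mem_add, mem_union, mem_singleton]
  constructor
  · rintro ⟨⟨b, hb | rfl, c, hc | rfl, rfl⟩, hnew⟩
    · exact absurd ⟨b, hb, c, hc, rfl⟩ hnew
    · exact Or.inr ⟨b, hb, by rwa [add_comm], add_comm _ _⟩
    · exact Or.inr ⟨c, hc, hnew, rfl⟩
    · exact Or.inl ⟨hnew, rfl⟩
  · rintro (⟨hnew, rfl⟩ | ⟨a, ha, hnew, rfl⟩)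
    · exact ⟨⟨x, Or.inr rfl, x, Or.inr rfl, rfl⟩, hnew⟩
    · exact ⟨⟨x, Or.inr rfl, a, Or.inl ha, rfl⟩, hnew⟩

theorem mem_union_singleton_sub_sdiff {G : Type*} [AddGroup G] [DecidableEq G]
    {s : Finset G} {x y : G} (hs : s.Nonempty) :
    y ∈ (s ∪ {x} - (s ∪ {x})) \ (s - s) ↔
      ∃ a ∈ s, x - a ∉ s - s ∧ (y = x - a ∨ y = -(x - a)) := by
  have neg_mem {z : G} (hz : z ∈ s - s) : -z ∈ s - s := by
    obtain ⟨b, hb, c, hc, rfl⟩ := mem_sub.1 hz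
    exact mem_sub.2 ⟨c, hc, b, hb, (neg_sub b c).symm⟩
  simp only [mem_sdiff, mem_sub, mem_union, mem_singleton]
  constructor
  · rintro ⟨⟨b, hb | rfl, c, hc | rfl, rfl⟩, hnew⟩
    · exact absurd ⟨b, hb, c, hc, rfl⟩ hnew
    · refine ⟨b, hb, fun h => hnew ?_, Or.inr (neg_sub _ _).symm⟩
      simpa [mem_sub] using neg_mem (mem_sub.2 h)
    · exact ⟨c, hc, hnew, Or.inl rfl⟩
    · obtain ⟨a, ha⟩ := hs
      exact absurd ⟨a, ha, a, ha, by simp⟩ hnew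
  · rintro ⟨a, ha, hnew, rfl | rfl⟩
    · exact ⟨⟨x, Or.inr rfl, a, Or.inl ha, rfl⟩, hnew⟩
    · refine ⟨⟨a, Or.inl ha, x, Or.inr rfl, (neg_sub x a).symm⟩, fun h => hnew ?_⟩
      simpa [mem_sub] using neg_mem (mem_sub.2 h)

/-- The paper's `A_{2l-1}`. -/
noncomputable def setA (l : ℤ) : Finset ℤ :=
  {0, 1, 2, 5, 8, 9, 10} ∪ image₂ (fun k c => 8 * k + c) (Icc 1 l) {6, 7, 9, 10}

/-- This form of membership is a Presburger formula, so `omega` checks every witness below. -/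
theorem mem_setA {l x : ℤ} : x ∈ setA l ↔
    (x = 0 ∨ x = 1 ∨ x = 2 ∨ x = 5 ∨ x = 8 ∨ x = 9 ∨ x = 10) ∨
      14 ≤ x ∧ x ≤ 8 * l + 10 ∧ (x % 8 = 1 ∨ x % 8 = 2 ∨ x % 8 = 6 ∨ x % 8 = 7) := by
  simp only [setA, mem_union, mem_image₂, mem_Icc, mem_insert, mem_singleton]
  refine or_congr Iff.rfl ⟨?_, fun h => ?_⟩
  · rintro ⟨k, hk, c, hc, rfl⟩
    omega
  · rcases h with ⟨hlo, hhi, h | h | h | h⟩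
    exacts [⟨x / 8 - 1, by omega, x % 8 + 8, by omega, by omega⟩,
      ⟨x / 8 - 1, by omega, x % 8 + 8, by omega, by omega⟩,
      ⟨x / 8, by omega, x % 8, by omega, by omega⟩,
      ⟨x / 8, by omega, x % 8, by omega, by omega⟩]

theorem notMem_add_setA_of_lt {l y : ℤ} (hl : 0 ≤ l) (hy : 16 * l + 20 < y) :
    y ∉ setA l + setA l := by
  intro hy'
  obtain ⟨b, hb, c, hc, rfl⟩ := mem_add.1 hy'
  rw [mem_setA] at hb hc
  omega

theorem notMem_sub_setA_of_lt {l y : ℤ} (hl : 0 ≤ l) (hy : 8 * l + 10 < y) :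
    y ∉ setA l - setA l := by
  intro hy'
  obtain ⟨b, hb, c, hc, rfl⟩ := mem_sub.1 hy'
  rw [mem_setA] at hb hc
  omega

theorem add_notMem_add_setA_iff {l a : ℤ} (hl : 1 ≤ l) (ha : a ∈ setA l) :
    8 * l + 14 + a ∉ setA l + setA l ↔ a = 8 * l + 7 ∨ a = 8 * l + 9 ∨ a = 8 * l + 10 := by
  refine ⟨fun hnew => ?_, fun h => notMem_add_setA_of_lt (by omega) (by omega)⟩
  by_contra hold
  suffices ∃ b c, b ∈ setA l ∧ c ∈ setA l ∧ b + c = 8 * l + 14 + a by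
    obtain ⟨b, c, hb, hc, h⟩ := this
    exact hnew (h ▸ add_mem_add hb hc)
  simp only [mem_setA]
  rcases mem_setA.1 ha with
    (rfl | rfl | rfl | rfl | rfl | rfl | rfl) | ⟨hlo, hhi, h | h | h | h⟩
  exacts [⟨5, 8 * l + 9, by omega⟩, ⟨5, 8 * l + 10, by omega⟩, ⟨10, 8 * l + 6, by omega⟩,
    ⟨9, 8 * l + 10, by omega⟩, ⟨15, 8 * l + 7, by omega⟩, ⟨14, 8 * l + 9, by omega⟩,
    ⟨14, 8 * l + 10, by omega⟩, ⟨a + 5, 8 * l + 9, by omega⟩, ⟨a + 4, 8 * l + 10, by omega⟩,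
    ⟨a + 4, 8 * l + 10, by omega⟩, ⟨a + 7, 8 * l + 7, by omega⟩]

theorem sub_notMem_sub_setA_iff {l a : ℤ} (hl : 1 ≤ l) (ha : a ∈ setA l) :
    8 * l + 14 - a ∉ setA l - setA l ↔ a = 0 ∨ a = 1 ∨ a = 2 := by
  refine ⟨fun hnew => ?_, fun h => notMem_sub_setA_of_lt (by omega) (by omega)⟩
  by_contra hold
  suffices ∃ b c, b ∈ setA l ∧ c ∈ setA l ∧ b - c = 8 * l + 14 - a by
    obtain ⟨b, c, hb, hc, h⟩ := this
    exact hnew (h ▸ sub_mem_sub hb hc)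
  simp only [mem_setA]
  rcases mem_setA.1 ha with
    (rfl | rfl | rfl | rfl | rfl | rfl | rfl) | ⟨hlo, hhi, h | h | h | h⟩
  · omega
  · omega
  · omega
  · exact ⟨8 * l + 9, 0, by omega⟩
  · exact ⟨8 * l + 6, 0, by omega⟩
  · exact ⟨8 * l + 10, 5, by omega⟩
  · exact ⟨8 * l + 6, 2, by omega⟩
  all_goals rcases lt_or_ge a (8 * l + 6) with hlow | htop
  exacts [⟨8 * l + 15 - a, 1, by omega⟩, ⟨5, 0, by omega⟩, ⟨8 * l + 16 - a, 2, by omega⟩,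
    ⟨5, 1, by omega⟩, ⟨8 * l + 16 - a, 2, by omega⟩, ⟨8, 0, by omega⟩,
    ⟨8 * l + 14 - a, 0, by omega⟩, ⟨8, 1, by omega⟩]

theorem add_sdiff_setA {l : ℤ} (hl : 1 ≤ l) :
    (setA l ∪ {8 * l + 14} + (setA l ∪ {8 * l + 14})) \ (setA l + setA l) =
      {16 * l + 21, 16 * l + 23, 16 * l + 24, 16 * l + 28} := by
  ext y
  have new_top {a : ℤ} (ha : a = 8 * l + 7 ∨ a = 8 * l + 9 ∨ a = 8 * l + 10)
      (hy : y = 8 * l + 14 + a) :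
      ∃ a ∈ setA l, 8 * l + 14 + a ∉ setA l + setA l ∧ y = 8 * l + 14 + a :=
    have ha' : a ∈ setA l := mem_setA.2 (by omega)
    ⟨a, ha', (add_notMem_add_setA_iff hl ha').2 ha, hy⟩
  rw [mem_union_singleton_add_sdiff]
  simp only [mem_insert, mem_singleton]
  constructor
  · rintro (⟨-, rfl⟩ | ⟨a, ha, hnew, rfl⟩)
    · omega
    · rcases (add_notMem_add_setA_iff hl ha).1 hnew with rfl | rfl | rfl <;> omega
  · rintro (hy | hy | hy | hy)
    · exact Or.inr (new_top (a := 8 * l + 7) (by omega) (by omega))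
    · exact Or.inr (new_top (a := 8 * l + 9) (by omega) (by omega))
    · exact Or.inr (new_top (a := 8 * l + 10) (by omega) (by omega))
    · exact Or.inl ⟨notMem_add_setA_of_lt (by omega) (by omega), by omega⟩

theorem sub_sdiff_setA {l : ℤ} (hl : 1 ≤ l) :
    (setA l ∪ {8 * l + 14} - (setA l ∪ {8 * l + 14})) \ (setA l - setA l) =
      {8 * l + 12, 8 * l + 13, 8 * l + 14, -(8 * l + 12), -(8 * l + 13), -(8 * l + 14)} := by
  ext y
  have new_bottom {a : ℤ} (ha : a = 0 ∨ a = 1 ∨ a = 2)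
      (hy : y = 8 * l + 14 - a ∨ y = -(8 * l + 14 - a)) :
      ∃ a ∈ setA l, 8 * l + 14 - a ∉ setA l - setA l ∧
        (y = 8 * l + 14 - a ∨ y = -(8 * l + 14 - a)) :=
    have ha' : a ∈ setA l := mem_setA.2 (by omega)
    ⟨a, ha', (sub_notMem_sub_setA_iff hl ha').2 ha, hy⟩
  rw [mem_union_singleton_sub_sdiff ⟨0, mem_setA.2 (by omega)⟩]
  simp only [mem_insert, mem_singleton]
  constructor
  · rintro ⟨a, ha, hnew, hy⟩
    rcases (sub_notMem_sub_setA_iff hl ha).1 hnew with rfl | rfl | rfl <;> omega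
  · rintro (hy | hy | hy | hy | hy | hy)
    · exact new_bottom (a := 2) (by omega) (by omega)
    · exact new_bottom (a := 1) (by omega) (by omega)
    · exact new_bottom (a := 0) (by omega) (by omega)
    · exact new_bottom (a := 2) (by omega) (by omega)
    · exact new_bottom (a := 1) (by omega) (by omega)
    · exact new_bottom (a := 0) (by omega) (by omega)

theorem stmt_17 (l : ℤ) (hl : 1 ≤ l) (A B : Finset ℤ)
    (hA : A = ({0, 1, 2, 5, 8, 9, 10} : Finset ℤ) ∪
      Finset.image₂ (fun k c => 8 * k + c) (Finset.Icc 1 l)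
        ({6, 7, 9, 10} : Finset ℤ))
    (hB : B = A ∪ {8 * l + 14}) :
    (B + B) \ (A + A) = {16 * l + 21, 16 * l + 23, 16 * l + 24, 16 * l + 28} ∧
    (B - B) \ (A - A) =
      {8 * l + 12, 8 * l + 13, 8 * l + 14, -(8 * l + 12), -(8 * l + 13), -(8 * l + 14)} ∧
    ((B + B) \ (A + A)).card = 4 ∧ ((B - B) \ (A - A)).card = 6 := by
  obtain rfl : A = setA l := hA
  subst hB
  rw [add_sdiff_setA hl, sub_sdiff_setA hl]
  refine ⟨rfl, rfl, ?_, ?_⟩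
  all_goals
    repeat rw [card_insert_of_notMem (by simp only [mem_insert, mem_singleton]; omega)]
    rfl
end

section
/- Let n be odd, n ≥ 5, and B = [0, n-1] \ {r} with 2 ≤ r ≤ n-3. With L = {2n-r, 3n-r, ..., (k+1)n-r} for k ≥ 2, a* = (k+3)n - 2r, and A = B ∪ L ∪ ({a*} - B) ∪ {n}, the set A is MSTD. -/
open Finset Pointwise

private lemma mulsplit (j c n : ℤ) (hc : c ≤ j) (hn : 0 ≤ n) :
    ∃ t, j * n = t + c * n ∧ 0 ≤ t ∧ (t = 0 ∨ n ≤ t) := by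
  refine ⟨(j - c) * n, by ring, mul_nonneg (by omega) hn, ?_⟩
  rcases eq_or_lt_of_le hc with h | h
  · exact Or.inl (by rw [← h]; ring)
  · exact Or.inr (by nlinarith)

theorem stmt_19 (n r k : ℤ) (hodd : Odd n) (hn : 5 ≤ n)
    (hr1 : 2 ≤ r) (hr2 : r ≤ n - 3) (hk : 2 ≤ k)
    (B L A : Finset ℤ)
    (hB : B = Finset.Icc 0 (n - 1) \ {r})
    (hL : L = (Finset.Icc 2 (k + 1)).image (fun j => j * n - r))
    (hA : A = B ∪ L ∪ B.image (fun b => (k + 3) * n - 2 * r - b) ∪ {n}) :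
    (A - A).card < (A + A).card := by
  obtain ⟨a, ha⟩ : ∃ a : ℤ, a = (k + 3) * n - 2 * r := ⟨_, rfl⟩
  obtain ⟨u, hu, hu0, _⟩ := mulsplit (k + 3) 5 n (by omega) (by omega)
  have ha' : a = u + 5 * n - 2 * r := by rw [ha, hu]
  obtain ⟨w, hw⟩ := hodd
  set S : Finset ℤ := B ∪ L ∪ B.image (fun b => (k + 3) * n - 2 * r - b) with hS
  have hAS : A = S ∪ {n} := hA
  clear_value S
  -- membership characterization of S
  have hmemS : ∀ x : ℤ, x ∈ S ↔ (0 ≤ x ∧ x ≤ n - 1 ∧ x ≠ r) ∨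
      (∃ j, (2 ≤ j ∧ j ≤ k + 1) ∧ x = j * n - r) ∨
      (∃ b, (0 ≤ b ∧ b ≤ n - 1 ∧ b ≠ r) ∧ x = a - b) := by
    intro x
    simp only [hS, hB, hL, Finset.mem_union, Finset.mem_sdiff, Finset.mem_Icc,
      Finset.mem_singleton, Finset.mem_image, ha]
    constructor
    · rintro ((⟨⟨h1, h2⟩, h3⟩ | ⟨j, hj, hjx⟩) | ⟨b, ⟨⟨hb1, hb2⟩, hb3⟩, hbx⟩)
      · exact Or.inl ⟨h1, h2, h3⟩
      · exact Or.inr (Or.inl ⟨j, ⟨hj.1, hj.2⟩, hjx.symm⟩)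
      · exact Or.inr (Or.inr ⟨b, ⟨hb1, hb2, hb3⟩, hbx.symm⟩)
    · rintro (⟨h1, h2, h3⟩ | ⟨j, hj, hjx⟩ | ⟨b, ⟨hb1, hb2, hb3⟩, hbx⟩)
      · exact Or.inl (Or.inl ⟨⟨h1, h2⟩, h3⟩)
      · exact Or.inl (Or.inr ⟨j, ⟨hj.1, hj.2⟩, hjx.symm⟩)
      · exact Or.inr ⟨b, ⟨⟨hb1, hb2⟩, hb3⟩, hbx.symm⟩
  -- symmetry of S about a
  have hSsymm : ∀ s ∈ S, a - s ∈ S := by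
    intro s hs
    rw [hmemS] at hs ⊢
    rcases hs with hb | ⟨j, hj, hjx⟩ | ⟨b, hb, hbx⟩
    · exact Or.inr (Or.inr ⟨s, hb, rfl⟩)
    · refine Or.inr (Or.inl ⟨k + 3 - j, ⟨by omega, by omega⟩, ?_⟩)
      rw [hjx, ha]; ring
    · left
      have : a - s = b := by rw [hbx]; ring
      rw [this]; exact hb
  -- n is not in S
  have hnS : n ∉ S := by
    rw [hmemS]
    rintro (⟨h1, h2, h3⟩ | ⟨j, ⟨hj1, hj2⟩, hjx⟩ | ⟨b, ⟨hb1, hb2, hb3⟩, hbx⟩)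
    · omega
    · obtain ⟨t, ht, ht0, ht2⟩ := mulsplit j 2 n (by omega) (by omega)
      rw [ht] at hjx; omega
    · omega
  -- 0 ∈ S
  have h0S : (0 : ℤ) ∈ S := by rw [hmemS]; exact Or.inl ⟨le_refl _, by omega, by omega⟩
  -- 2n not in S + S
  have h2n : (2 * n) ∉ S + S := by
    rw [Finset.mem_add]
    rintro ⟨y, hy, z, hz, hyz⟩
    rw [hmemS] at hy hz
    rcases hy with ⟨hy1, hy2, hy3⟩ | ⟨j, ⟨hj1, hj2⟩, hjx⟩ | ⟨b, ⟨hb1, hb2, hb3⟩, hbx⟩ <;>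
      rcases hz with ⟨hz1, hz2, hz3⟩ | ⟨i, ⟨hi1, hi2⟩, hix⟩ | ⟨c, ⟨hc1, hc2, hc3⟩, hcx⟩
    · omega
    · obtain ⟨t, ht, ht0, ht2⟩ := mulsplit i 2 n (by omega) (by omega)
      rw [ht] at hix; omega
    · omega
    · obtain ⟨t, ht, ht0, ht2⟩ := mulsplit j 2 n (by omega) (by omega)
      rw [ht] at hjx; omega
    · obtain ⟨t, ht, ht0, ht2⟩ := mulsplit j 2 n (by omega) (by omega)
      obtain ⟨s', hs', hs0', _⟩ := mulsplit i 2 n (by omega) (by omega)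
      rw [ht] at hjx; rw [hs'] at hix; omega
    · obtain ⟨t, ht, ht0, ht2⟩ := mulsplit j 2 n (by omega) (by omega)
      rw [ht] at hjx; omega
    · omega
    · obtain ⟨t, ht, ht0, ht2⟩ := mulsplit i 2 n (by omega) (by omega)
      rw [ht] at hix; omega
    · omega
  -- key: (a - n) + S ⊆ S + S
  have hkey : ∀ s ∈ S, (a - n) + s ∈ S + S := by
    intro s hs
    rw [Finset.mem_add]
    rw [hmemS] at hs
    rcases hs with ⟨h1, h2, h3⟩ | ⟨j, ⟨hj1, hj2⟩, hjx⟩ | ⟨b, ⟨hb1, hb2, hb3⟩, hbx⟩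
    · -- s ∈ B
      rcases eq_or_ne s 0 with h0 | h0
      · refine ⟨2 * n - r, ?_, k * n - r, ?_, ?_⟩
        · rw [hmemS]; exact Or.inr (Or.inl ⟨2, ⟨le_refl _, by omega⟩, rfl⟩)
        · rw [hmemS]; exact Or.inr (Or.inl ⟨k, ⟨by omega, by omega⟩, rfl⟩)
        · rw [h0, ha]; ring
      · rcases eq_or_ne (n - s) r with hr | hr
        · refine ⟨1, ?_, a - (r + 1), ?_, ?_⟩
          · rw [hmemS]; exact Or.inl ⟨by omega, by omega, by omega⟩
          · rw [hmemS]; exact Or.inr (Or.inr ⟨r + 1, ⟨by omega, by omega, by omega⟩, rfl⟩)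
          · omega
        · refine ⟨0, ?_, a - (n - s), ?_, ?_⟩
          · rw [hmemS]; exact Or.inl ⟨le_refl _, by omega, by omega⟩
          · rw [hmemS]; exact Or.inr (Or.inr ⟨n - s, ⟨by omega, by omega, hr⟩, rfl⟩)
          · ring
    · -- s ∈ L
      rcases eq_or_lt_of_le hj1 with hj | hj
      · refine ⟨n - r, ?_, a - 0, ?_, ?_⟩
        · rw [hmemS]; exact Or.inl ⟨by omega, by omega, by omega⟩
        · rw [hmemS]; exact Or.inr (Or.inr ⟨0, ⟨le_refl _, by omega, by omega⟩, rfl⟩)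
        · rw [hjx, ← hj]; ring
      · refine ⟨a - 0, ?_, (j - 1) * n - r, ?_, ?_⟩
        · rw [hmemS]; exact Or.inr (Or.inr ⟨0, ⟨le_refl _, by omega, by omega⟩, rfl⟩)
        · rw [hmemS]; exact Or.inr (Or.inl ⟨j - 1, ⟨by omega, by omega⟩, rfl⟩)
        · rw [hjx]; ring
    · -- s ∈ a - B
      rcases eq_or_ne b (n - 1) with hbn | hbn
      · refine ⟨a - (r - 1), ?_, (k + 1) * n - r, ?_, ?_⟩
        · rw [hmemS]; exact Or.inr (Or.inr ⟨r - 1, ⟨by omega, by omega, by omega⟩, rfl⟩)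
        · rw [hmemS]; exact Or.inr (Or.inl ⟨k + 1, ⟨by omega, le_refl _⟩, rfl⟩)
        · rw [hbx, hbn, ha]; ring
      · rcases eq_or_ne (b + 1) r with hbr | hbr
        · refine ⟨a - (n - 2), ?_, a - (b + 2), ?_, ?_⟩
          · rw [hmemS]; exact Or.inr (Or.inr ⟨n - 2, ⟨by omega, by omega, by omega⟩, rfl⟩)
          · rw [hmemS]; exact Or.inr (Or.inr ⟨b + 2, ⟨by omega, by omega, by omega⟩, rfl⟩)
          · rw [hbx]; ring
        · refine ⟨a - (n - 1), ?_, a - (b + 1), ?_, ?_⟩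
          · rw [hmemS]; exact Or.inr (Or.inr ⟨n - 1, ⟨by omega, by omega, by omega⟩, rfl⟩)
          · rw [hmemS]; exact Or.inr (Or.inr ⟨b + 1, ⟨by omega, by omega, hbr⟩, rfl⟩)
          · rw [hbx]; ring
  -- A + A
  have hApA : A + A = ((S + S) ∪ ({n} + S)) ∪ {2 * n} := by
    rw [hAS, Finset.union_add, Finset.add_union, Finset.add_union,
      Finset.singleton_add_singleton, add_comm S ({n} : Finset ℤ)]
    have h2 : n + n = 2 * n := by ring
    rw [h2]
    ext x
    simp only [Finset.mem_union]
    tauto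
  -- A - A
  have hAmA : A - A = ((S + S) ∪ ({n} + S)).image (fun x => x - a) := by
    ext x
    constructor
    · intro hx
      obtain ⟨y, hy, z, hz, hyz⟩ := Finset.mem_sub.mp hx
      rw [hAS, Finset.mem_union, Finset.mem_singleton] at hy hz
      rw [Finset.mem_image]
      rcases hy with hy | hy <;> rcases hz with hz | hz
      · exact ⟨y + (a - z),
          Finset.mem_union_left _ (Finset.mem_add.mpr ⟨y, hy, a - z, hSsymm z hz, rfl⟩),
          by omega⟩
      · obtain ⟨p, hp, q, hq, hpq⟩ := Finset.mem_add.mp (hkey y hy)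
        exact ⟨p + q,
          Finset.mem_union_left _ (Finset.mem_add.mpr ⟨p, hp, q, hq, rfl⟩), by omega⟩
      · exact ⟨n + (a - z),
          Finset.mem_union_right _ (Finset.mem_add.mpr
            ⟨n, Finset.mem_singleton_self n, a - z, hSsymm z hz, rfl⟩), by omega⟩
      · exact ⟨0 + (a - 0),
          Finset.mem_union_left _ (Finset.mem_add.mpr ⟨0, h0S, a - 0, hSsymm 0 h0S, rfl⟩),
          by omega⟩
    · intro hx
      obtain ⟨y, hy, hya⟩ := Finset.mem_image.mp hx
      rw [Finset.mem_sub]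
      rcases Finset.mem_union.mp hy with h | h
      · obtain ⟨p, hp, q, hq, hpq⟩ := Finset.mem_add.mp h
        refine ⟨p, ?_, a - q, ?_, by omega⟩
        · rw [hAS]; exact Finset.mem_union_left _ hp
        · rw [hAS]; exact Finset.mem_union_left _ (hSsymm q hq)
      · obtain ⟨p, hp, q, hq, hpq⟩ := Finset.mem_add.mp h
        rw [Finset.mem_singleton] at hp
        refine ⟨n, ?_, a - q, ?_, by omega⟩
        · rw [hAS]; exact Finset.mem_union_right _ (Finset.mem_singleton_self n)
        · rw [hAS]; exact Finset.mem_union_left _ (hSsymm q hq)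
  have h2nU : 2 * n ∉ (S + S) ∪ ({n} + S) := by
    rw [Finset.mem_union]
    rintro (h | h)
    · exact h2n h
    · obtain ⟨p, hp, q, hq, hpq⟩ := Finset.mem_add.mp h
      rw [Finset.mem_singleton] at hp
      have hqn : q = n := by omega
      rw [hqn] at hq
      exact hnS hq
  rw [hApA, hAmA,
    Finset.card_image_of_injective _ (sub_left_injective),
    Finset.card_union_of_disjoint (Finset.disjoint_singleton_right.mpr h2nU),
    Finset.card_singleton]
  omega
end
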